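/- arXiv:1006.5812 — 11 statements merged into one kernel-verified Lean document; each statement's English description precedes it below -/
import Mathlib

section
/- Let k, n and x be positive integers. Then (i) f_{k+1}(n) ≤ f_k(n); (ii) f_k(n) ≤ f_k(n+x); and moreover (ii) can be improved to f_k(n) ≤ f_k(n+x) − ⌈(x/(n+x))·f_k(n+x)⌉, and hence f_k(n) ≤ (1 − x/(n+x))·f_k(n+x). -/
/-- An `n`-ary `k`-radius sequence of length `m`: any two distinct alphabet symbols
occur within distance `k` of each other somewhere in the sequence. -/
def IsRadiusSeq (k n m : ℕ) (a : Fin m → Fin n) : Prop :=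
  ∀ x y : Fin n, x ≠ y →
    ∃ i j : Fin m, a i = x ∧ a j = y ∧ |(i.val : ℤ) - (j.val : ℤ)| ≤ (k : ℤ)

/-- `radiusMin k n` is `f_k(n)`, the shortest length of an `n`-ary `k`-radius sequence. -/
noncomputable def radiusMin (k n : ℕ) : ℕ :=
  sInf {m | ∃ a : Fin m → Fin n, IsRadiusSeq k n m a}


lemma radius_exists (k n : ℕ) (hk : 0 < k) (hn : 0 < n) :
    ∃ a : Fin (2*n*n) → Fin n, IsRadiusSeq k n (2*n*n) a := by
  refine ⟨fun i => if i.val % 2 = 0 then ⟨i.val / 2 / n % n, Nat.mod_lt _ hn⟩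
    else ⟨i.val / 2 % n, Nat.mod_lt _ hn⟩, ?_⟩
  intro x y hxy
  have hy : y.val < n := y.isLt
  have hx : x.val < n := x.isLt
  set t : ℕ := x.val * n + y.val with ht
  have htlt : t < n * n := by
    calc t < x.val * n + n := by omega
    _ = (x.val + 1) * n := by ring
    _ ≤ n * n := Nat.mul_le_mul_right n (by omega)
  have hi : 2 * t < 2 * n * n := by rw [mul_assoc]; omega
  have hj : 2 * t + 1 < 2 * n * n := by rw [mul_assoc]; omega
  refine ⟨⟨2*t, hi⟩, ⟨2*t+1, hj⟩, ?_, ?_, ?_⟩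
  · have h1 : (2*t) % 2 = 0 := by omega
    simp only [h1, if_pos]
    have h2 : (2*t) / 2 = t := by omega
    have h3 : t / n = x.val := by
      rw [ht, add_comm, Nat.add_mul_div_right _ _ hn, Nat.div_eq_of_lt hy, Nat.zero_add]
    ext
    simp [h2, h3, Nat.mod_eq_of_lt hx]
  · have h1 : (2*t+1) % 2 = 1 := by omega
    simp only [h1]
    norm_num
    have h2 : (2*t+1) / 2 = t := by omega
    have h3 : t % n = y.val := by
      rw [ht, add_comm, Nat.add_mul_mod_self_right, Nat.mod_eq_of_lt hy]
    ext
    simp [h2, h3]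
  · simp only []
    push_cast
    rw [abs_sub_comm]
    have : |(2*(t:ℤ)+1) - 2*t| = 1 := by norm_num
    omega


lemma strictMono_gap {p M : ℕ} (f : Fin p → Fin M) (hf : StrictMono f) :
    ∀ (d : ℕ) (i j : Fin p), i.val + d = j.val → (f i).val + d ≤ (f j).val := by
  intro d
  induction d with
  | zero => intro i j h; have : i = j := Fin.ext (by omega); simp [this]
  | succ d ih =>
    intro i j h
    have hj0 : j.val - 1 < p := by omega
    set j0 : Fin p := ⟨j.val - 1, hj0⟩ with hj0def
    have h1 : i.val + d = j0.val := by simp [hj0def]; omega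
    have h2 := ih i j0 h1
    have h3 : j0 < j := by simp [Fin.lt_def, hj0def]; omega
    have h4 := Fin.lt_def.mp (hf h3)
    omega

lemma abs_gap {p M : ℕ} (f : Fin p → Fin M) (hf : StrictMono f) (i j : Fin p) :
    |(i.val : ℤ) - (j.val : ℤ)| ≤ |((f i).val : ℤ) - ((f j).val : ℤ)| := by
  rcases le_total i j with h | h
  · have hle := Fin.le_def.mp h
    have hg := strictMono_gap f hf (j.val - i.val) i j (by omega)
    rw [abs_sub_comm, abs_sub_comm ((f i).val : ℤ)]
    rw [abs_of_nonneg (by omega), abs_of_nonneg (by omega)]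
    omega
  · have hle := Fin.le_def.mp h
    have hg := strictMono_gap f hf (i.val - j.val) j i (by omega)
    rw [abs_of_nonneg (by omega), abs_of_nonneg (by omega)]
    omega

lemma delete_lemma {k n x M m c : ℕ} (a : Fin M → Fin (n + x)) (ha : IsRadiusSeq k (n + x) M a)
    (S : Finset (Fin (n + x))) (hS : S.card = x)
    (hcc : (Finset.univ.filter (fun i => a i ∈ S)).card = c) (hm : m + c = M) :
    ∃ b : Fin m → Fin n, IsRadiusSeq k n m b := by
  classical
  have hsplit := Finset.card_filter_add_card_filter_not
    (s := (Finset.univ : Finset (Fin M))) (fun i => a i ∈ S)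
  have hcard : (Finset.univ : Finset (Fin M)).card = M := by simp
  have hT : (Finset.univ.filter (fun i => a i ∉ S)).card = m := by omega
  have hSc : Sᶜ.card = n := by
    rw [Finset.card_compl, hS]; simp
  set e := (Finset.univ.filter (fun i => a i ∉ S)).orderIsoOfFin hT with he
  set r := Sᶜ.orderIsoOfFin hSc with hr
  have hmem : ∀ i : Fin m, a ((e i : Fin M)) ∈ Sᶜ := by
    intro i
    have h2 : (e i : Fin M) ∈ Finset.univ.filter (fun i => a i ∉ S) := (e i).2
    exact Finset.mem_compl.mpr (Finset.mem_filter.mp h2).2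
  refine ⟨fun i => r.symm ⟨a (e i : Fin M), hmem i⟩, ?_⟩
  intro x' y' hxy
  have huv : ((r x' : Fin (n + x))) ≠ (r y' : Fin (n + x)) := by
    intro h
    exact hxy (r.injective (Subtype.ext h))
  obtain ⟨i, j, hi, hj, hd⟩ := ha (r x') (r y') huv
  have hiT : i ∈ Finset.univ.filter (fun i => a i ∉ S) := by
    simp only [Finset.mem_filter, Finset.mem_univ, true_and]
    rw [hi]; exact Finset.mem_compl.mp (r x').2
  have hjT : j ∈ Finset.univ.filter (fun i => a i ∉ S) := by
    simp only [Finset.mem_filter, Finset.mem_univ, true_and]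
    rw [hj]; exact Finset.mem_compl.mp (r y').2
  refine ⟨e.symm ⟨i, hiT⟩, e.symm ⟨j, hjT⟩, ?_, ?_, ?_⟩
  · show r.symm ⟨a (e (e.symm ⟨i, hiT⟩) : Fin M), _⟩ = x'
    rw [OrderIso.symm_apply_eq]
    apply Subtype.ext
    show a (e (e.symm ⟨i, hiT⟩) : Fin M) = (r x' : Fin (n + x))
    rw [OrderIso.apply_symm_apply]
    exact hi
  · show r.symm ⟨a (e (e.symm ⟨j, hjT⟩) : Fin M), _⟩ = y'
    rw [OrderIso.symm_apply_eq]
    apply Subtype.ext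
    show a (e (e.symm ⟨j, hjT⟩) : Fin M) = (r y' : Fin (n + x))
    rw [OrderIso.apply_symm_apply]
    exact hj
  · have hmono : StrictMono (fun i : Fin m => (e i : Fin M)) := by
      intro p q hpq
      exact e.strictMono hpq
    have hg := abs_gap _ hmono (e.symm ⟨i, hiT⟩) (e.symm ⟨j, hjT⟩)
    refine hg.trans ?_
    have h1 : (e (e.symm ⟨i, hiT⟩) : Fin M) = i := by rw [OrderIso.apply_symm_apply]
    have h2 : (e (e.symm ⟨j, hjT⟩) : Fin M) = j := by rw [OrderIso.apply_symm_apply]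
    calc |(((fun i : Fin m => (e i : Fin M)) (e.symm ⟨i, hiT⟩)).val : ℤ) -
        (((fun i : Fin m => (e i : Fin M)) (e.symm ⟨j, hjT⟩)).val : ℤ)|
        = |(i.val : ℤ) - (j.val : ℤ)| := by rw [show ((fun i : Fin m => (e i : Fin M)) (e.symm ⟨i, hiT⟩)) = i from h1, show ((fun i : Fin m => (e i : Fin M)) (e.symm ⟨j, hjT⟩)) = j from h2]
      _ ≤ (k : ℤ) := hd


lemma counting_lemma {n x M : ℕ} (hx : 0 < x) (a : Fin M → Fin (n + x)) :
    ∃ S : Finset (Fin (n + x)), S.card = x ∧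
      x * M ≤ (n + x) * (Finset.univ.filter (fun i => a i ∈ S)).card := by
  classical
  set cnt : Fin (n + x) → ℕ := fun s => (Finset.univ.filter (fun i => a i = s)).card with hcnt
  have hMsum : M = ∑ s : Fin (n + x), cnt s := by
    have := Finset.card_eq_sum_card_fiberwise
      (f := a) (s := (Finset.univ : Finset (Fin M))) (t := (Finset.univ : Finset (Fin (n + x))))
      (fun i _ => Finset.mem_univ _)
    simpa using this
  -- fiber card for any S
  have hfiber : ∀ S : Finset (Fin (n + x)),
      (Finset.univ.filter (fun i => a i ∈ S)).card = ∑ s ∈ S, cnt s := by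
    intro S
    have h1 := Finset.card_eq_sum_card_fiberwise
      (f := a) (s := Finset.univ.filter (fun i => a i ∈ S)) (t := S)
      (fun i hi => (Finset.mem_filter.mp hi).2)
    rw [h1]
    apply Finset.sum_congr rfl
    intro s hs
    congr 1
    ext i
    simp only [Finset.mem_filter, Finset.mem_univ, true_and]
    constructor
    · rintro ⟨_, h⟩; exact h
    · intro h; exact ⟨h ▸ hs, h⟩
  -- the collection of x-subsets
  have hxle : x ≤ (Finset.univ : Finset (Fin (n + x))).card := by simp
  obtain ⟨S₀, _, hS₀⟩ := Finset.exists_subset_card_eq hxle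
  have hne : (Finset.univ.powersetCard x : Finset (Finset (Fin (n + x)))).Nonempty :=
    ⟨S₀, by simp [Finset.mem_powersetCard, hS₀]⟩
  obtain ⟨S, hSmem, hSmax⟩ := Finset.exists_max_image _ (fun S => ∑ s ∈ S, cnt s) hne
  have hScard : S.card = x := (Finset.mem_powersetCard.mp hSmem).2
  -- every element outside S has count ≤ every element inside S
  have hswap : ∀ s ∈ S, ∀ t ∉ S, cnt t ≤ cnt s := by
    intro s hs t ht
    set S' := insert t (S.erase s) with hS'
    have htS' : t ∉ S.erase s := fun h => ht (Finset.mem_of_mem_erase h)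
    have hS'card : S'.card = x := by
      rw [hS', Finset.card_insert_of_notMem htS', Finset.card_erase_of_mem hs, hScard]
      omega
    have hS'mem : S' ∈ Finset.univ.powersetCard x := by
      simp [Finset.mem_powersetCard, hS'card]
    have hle := hSmax S' hS'mem
    have hsum' : ∑ s' ∈ S', cnt s' = cnt t + ∑ s' ∈ S.erase s, cnt s' := by
      rw [hS', Finset.sum_insert htS']
    have hsum : cnt s + ∑ s' ∈ S.erase s, cnt s' = ∑ s' ∈ S, cnt s' :=
      Finset.add_sum_erase S cnt hs
    omega
  -- S is nonempty, pick min element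
  have hSne : S.Nonempty := Finset.card_pos.mp (by omega)
  obtain ⟨s₀, hs₀, hs₀min⟩ := Finset.exists_min_image S cnt hSne
  have h1 : ∑ s ∈ Sᶜ, cnt s ≤ n * cnt s₀ := by
    have := Finset.sum_le_card_nsmul Sᶜ cnt (cnt s₀)
      (fun t ht => hswap s₀ hs₀ t (Finset.mem_compl.mp ht))
    have hcc : Sᶜ.card = n := by rw [Finset.card_compl, hScard]; simp
    rwa [hcc, smul_eq_mul] at this
  have h2 : x * cnt s₀ ≤ ∑ s ∈ S, cnt s := by
    have := Finset.card_nsmul_le_sum S cnt (cnt s₀) (fun t ht => hs₀min t ht)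
    rwa [hScard, smul_eq_mul] at this
  have hsplitsum : ∑ s ∈ S, cnt s + ∑ s ∈ Sᶜ, cnt s = ∑ s : Fin (n + x), cnt s := by
    rw [Finset.sum_add_sum_compl]
  refine ⟨S, hScard, ?_⟩
  rw [hfiber S]
  nlinarith [hswap, hMsum]


lemma radius_set_nonempty (k n : ℕ) (hk : 0 < k) (hn : 0 < n) :
    {m | ∃ a : Fin m → Fin n, IsRadiusSeq k n m a}.Nonempty :=
  ⟨2 * n * n, radius_exists k n hk hn⟩


theorem stmt_0 (k n x : ℕ) (hk : 0 < k) (hn : 0 < n) (hx : 0 < x) :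
    radiusMin (k + 1) n ≤ radiusMin k n ∧
    radiusMin k n ≤ radiusMin k (n + x) ∧
    (radiusMin k n : ℚ) ≤
      (radiusMin k (n + x) : ℚ) -
        ⌈((x : ℚ) / ((n : ℚ) + (x : ℚ))) * (radiusMin k (n + x) : ℚ)⌉ ∧
    (radiusMin k n : ℚ) ≤
      (1 - (x : ℚ) / ((n : ℚ) + (x : ℚ))) * (radiusMin k (n + x) : ℚ) := by

  classical
  have hnx : 0 < n + x := by omega
  -- part 1
  have part1 : radiusMin (k + 1) n ≤ radiusMin k n := by
    obtain ⟨a, ha⟩ := Nat.sInf_mem (radius_set_nonempty k n hk hn)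
    apply Nat.sInf_le
    refine ⟨a, fun u v huv => ?_⟩
    obtain ⟨i, j, h1, h2, h3⟩ := ha u v huv
    exact ⟨i, j, h1, h2, h3.trans (by omega)⟩
  -- minimal sequence for n + x
  set M := radiusMin k (n + x) with hM
  have hMem : ∃ a : Fin M → Fin (n + x), IsRadiusSeq k (n + x) M a :=
    Nat.sInf_mem (radius_set_nonempty k (n + x) hk hnx)
  obtain ⟨a, ha⟩ := hMem
  obtain ⟨S, hScard, hSbound⟩ := counting_lemma (n := n) hx a
  set c := (Finset.univ.filter (fun i => a i ∈ S)).card with hc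
  have hcM : c ≤ M := by
    calc c ≤ (Finset.univ : Finset (Fin M)).card := Finset.card_filter_le _ _
    _ = M := by simp
  obtain ⟨b, hb⟩ := delete_lemma (m := M - c) a ha S hScard hc.symm (by omega)
  have hmain : radiusMin k n ≤ M - c := Nat.sInf_le ⟨b, hb⟩
  -- rational bound on c
  have hceil : (⌈((x : ℚ) / ((n : ℚ) + (x : ℚ))) * (M : ℚ)⌉ : ℚ) ≤ (c : ℚ) := by
    have h1 : ((x : ℚ) / ((n : ℚ) + (x : ℚ))) * (M : ℚ) ≤ (c : ℚ) := by
      rw [div_mul_eq_mul_div, div_le_iff₀ (by positivity)]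
      have h0 : ((x * M : ℕ) : ℚ) ≤ (((n + x) * c : ℕ) : ℚ) := by exact_mod_cast hSbound
      push_cast at h0
      linarith
    have h2 : ⌈((x : ℚ) / ((n : ℚ) + (x : ℚ))) * (M : ℚ)⌉ ≤ (c : ℤ) := by
      rw [Int.ceil_le]; push_cast; exact h1
    exact_mod_cast h2
  have hcast : ((M - c : ℕ) : ℚ) = (M : ℚ) - (c : ℚ) := by
    push_cast [Nat.cast_sub hcM]; ring
  have part3 : (radiusMin k n : ℚ) ≤
      (M : ℚ) - ⌈((x : ℚ) / ((n : ℚ) + (x : ℚ))) * (M : ℚ)⌉ := by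
    calc (radiusMin k n : ℚ) ≤ ((M - c : ℕ) : ℚ) := by exact_mod_cast hmain
    _ = (M : ℚ) - (c : ℚ) := hcast
    _ ≤ (M : ℚ) - ⌈((x : ℚ) / ((n : ℚ) + (x : ℚ))) * (M : ℚ)⌉ := by linarith
  have part2 : radiusMin k n ≤ M := hmain.trans (Nat.sub_le _ _)
  have part4 : (radiusMin k n : ℚ) ≤
      (1 - (x : ℚ) / ((n : ℚ) + (x : ℚ))) * (M : ℚ) := by
    have hle := Int.le_ceil (((x : ℚ) / ((n : ℚ) + (x : ℚ))) * (M : ℚ))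
    have : (1 - (x : ℚ) / ((n : ℚ) + (x : ℚ))) * (M : ℚ)
        = (M : ℚ) - ((x : ℚ) / ((n : ℚ) + (x : ℚ))) * (M : ℚ) := by ring
    rw [this]
    linarith
  exact ⟨part1, part2, part3, part4⟩
end

section
/- Let p be a prime and k a positive integer. Suppose D ⊆ (ℤ/pℤ)^* has the property that the sets B_{k,p}(d) with d ∈ D cover (ℤ/pℤ)^*, i.e. every nonzero residue modulo p lies in some B_{k,p}(d) with d ∈ D. Then there exists a p-ary k-radius sequence of length |D|·(p+k−1)+1; in particular f_k(p) ≤ |D|·(p+k−1)+1. -/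
/-- `B_{k,p}(d) = d·{±1, ±2, …, ±k} ⊆ ℤ/pℤ`. -/
def Bset (k p : ℕ) (d : ZMod p) : Set (ZMod p) :=
  {z | ∃ i : ℕ, 1 ≤ i ∧ i ≤ k ∧ (z = (i : ZMod p) * d ∨ z = -((i : ZMod p) * d))}

/-!
Write `N = p + k - 1` and enumerate `D` as `d₀, …, d_{L-1}`. Concatenate `L` arithmetic
progressions of length `N + 1` in `ℤ/pℤ`, the `q`-th with difference `d_q`, each starting
where the previous one ended; this gives a sequence of length `L·N + 1`. Since `d_q ≠ 0`,
every residue `x` occurs among the first `p` terms of the `q`-th progression, and `i ≤ k`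
steps later (still inside the progression, as `p - 1 + k = N`) the term `x + i·d_q` occurs.
As every nonzero difference `y - x` is `±i·d_q` for some `q` and `1 ≤ i ≤ k`, every pair of
distinct residues is `k`-close.
-/
open Finset

section BlockSeq

variable {M : Type*} [AddCommMonoid M] (N : ℕ) (d : ℕ → M)

/-- Concatenation of the progressions `N • ∑ j < q, d j + t • d q`, `t ≤ N`, over
`q = 0, 1, …`; consecutive progressions share their common endpoint. -/
def blockSeq (m : ℕ) : M :=
  N • ∑ j ∈ range (m / N), d j + (m % N) • d (m / N)

lemma blockSeq_mul_add {q t : ℕ} (hN : 0 < N) (ht : t ≤ N) :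
    blockSeq N d (N * q + t) = N • ∑ j ∈ range q, d j + t • d q := by
  rcases ht.lt_or_eq with ht | rfl
  · simp only [blockSeq, Nat.mul_add_div hN, Nat.div_eq_of_lt ht, add_zero, Nat.mul_add_mod,
      Nat.mod_eq_of_lt ht]
  · rw [← Nat.mul_succ, blockSeq, Nat.mul_div_cancel_left _ hN, Nat.mul_mod_right, zero_smul,
      add_zero, sum_range_succ, smul_add]

end BlockSeq

section RadiusSeq

variable {p : ℕ} [Fact p.Prime]

lemma exists_blockSeq_eq_of_ne_zero {L N q i : ℕ} (d : ℕ → ZMod p) (hq : q < L)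
    (hdq : d q ≠ 0) (hN : p + i ≤ N + 1) (x : ZMod p) :
    ∃ m, m + i ≤ L * N ∧ blockSeq N d m = x ∧ blockSeq N d (m + i) = x + i * d q := by
  have hp := (Fact.out : p.Prime).two_le
  obtain ⟨s, hsp, hs⟩ : ∃ s < p, (s : ZMod p) * d q = x - N * ∑ j ∈ range q, d j :=
    ⟨_, ZMod.val_lt _, by rw [ZMod.natCast_zmod_val, inv_mul_cancel_right₀ hdq]⟩
  have hqL : N * q + N ≤ L * N := by nlinarith
  refine ⟨N * q + s, by omega, ?_, ?_⟩
  · rw [blockSeq_mul_add N d (by omega) (by omega), nsmul_eq_mul, nsmul_eq_mul, hs,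
      add_sub_cancel]
  · rw [add_assoc, blockSeq_mul_add N d (by omega) (by omega), nsmul_eq_mul, nsmul_eq_mul]
    push_cast
    linear_combination hs

theorem isRadiusSeq_blockSeq {k : ℕ} (L : ℕ) (d : ℕ → ZMod p)
    (hcover : ∀ z : ZMod p, z ≠ 0 → ∃ q < L, z ∈ Bset k p (d q)) :
    IsRadiusSeq k p (L * (p + k - 1) + 1)
      (fun m => (ZMod.finEquiv p).symm (blockSeq (p + k - 1) d m)) := by
  intro x y hxy
  set e := ZMod.finEquiv p
  have hz : e y - e x ≠ 0 := sub_ne_zero.2 (e.injective.ne hxy).symm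
  obtain ⟨q, hq, i, hi, hik, hzd⟩ := hcover _ hz
  have hdq : d q ≠ 0 := by
    rintro h
    rcases hzd with hzd | hzd <;> simp [h] at hzd <;> exact hz hzd
  have hN : p + i ≤ p + k - 1 + 1 := by omega
  rcases hzd with hzd | hzd
  · obtain ⟨m, hm, h₁, h₂⟩ := exists_blockSeq_eq_of_ne_zero d hq hdq hN (e x)
    refine ⟨⟨m, by omega⟩, ⟨m + i, by omega⟩, e.symm_apply_eq.2 h₁,
      e.symm_apply_eq.2 ?_, ?_⟩
    · rw [h₂, ← hzd, add_sub_cancel]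
    · simp only [Nat.cast_add, abs_le]
      omega
  · obtain ⟨m, hm, h₁, h₂⟩ := exists_blockSeq_eq_of_ne_zero d hq hdq hN (e y)
    refine ⟨⟨m + i, by omega⟩, ⟨m, by omega⟩, e.symm_apply_eq.2 ?_,
      e.symm_apply_eq.2 h₁, ?_⟩
    · rw [h₂]
      linear_combination hzd
    · simp only [Nat.cast_add, abs_le]
      omega

end RadiusSeq

theorem stmt_2_general (p k : ℕ) (hp : p.Prime) (D : Finset (ZMod p))
    (hcover : ∀ z : ZMod p, z ≠ 0 → ∃ d ∈ D, z ∈ Bset k p d) :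
    (∃ a : Fin (D.card * (p + k - 1) + 1) → Fin p,
        IsRadiusSeq k p (D.card * (p + k - 1) + 1) a) ∧
      radiusMin k p ≤ D.card * (p + k - 1) + 1 := by
  have := Fact.mk hp
  have hseq := isRadiusSeq_blockSeq (k := k) D.toList.length (D.toList.getD · 0) fun z hz => by
    obtain ⟨d, hd, hzd⟩ := hcover z hz
    obtain ⟨q, hq, rfl⟩ := List.mem_iff_getElem.1 (Finset.mem_toList.2 hd)
    exact ⟨q, hq, by rwa [List.getD_eq_getElem]⟩
  rw [Finset.length_toList] at hseq
  exact ⟨⟨_, hseq⟩, Nat.sInf_le ⟨_, hseq⟩⟩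

theorem stmt_2 (p k : ℕ) (hp : p.Prime) (hk : 0 < k) (D : Finset (ZMod p))
    (hD : ∀ d ∈ D, d ≠ 0)
    (hcover : ∀ z : ZMod p, z ≠ 0 → ∃ d ∈ D, z ∈ Bset k p d) :
    (∃ a : Fin (D.card * (p + k - 1) + 1) → Fin p,
        IsRadiusSeq k p (D.card * (p + k - 1) + 1) a) ∧
      radiusMin k p ≤ D.card * (p + k - 1) + 1 :=
  stmt_2_general p k hp D hcover
end

section
/- Let p be an odd prime and let ℓ be the multiplicative order of 2 modulo p. Then: if ℓ is odd, f_2(p) ≤ (1/4)(p+1)(p−1)(1 + 1/ℓ) + 1; if ℓ ≡ 2 (mod 4), f_2(p) ≤ (1/4)(p+1)(p−1)(1 + 2/ℓ) + 1; and if ℓ ≡ 0 (mod 4), f_2(p) ≤ (1/4)(p+1)(p−1) + 1. -/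
/-! Let `M` be the order of `2` in `(ZMod p)ˣ ⧸ {±1}`. Every nonzero residue is `± r * 2 ^ j` with
`j < M` and `r` one of `N = (p - 1) / (2 * M)` coset representatives of `⟨± 2⟩`, so with
`D = {r * 4 ^ i | i < ⌈M / 2⌉}` every nonzero difference is `± c` or `± 2 * c` for some `c ∈ D`.
For each `c ∈ D` an arithmetic progression of step `c` and length `p + 1` puts every pair of
residues with difference `c` at distance `1` and every pair with difference `2 * c` at distance
`2`; concatenating them gives a `2`-radius sequence of length `|D| * (p + 1) + 1`. Finally
`ℓ = M` or `ℓ = 2 * M`, which yields the three cases. -/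

open Finset Subgroup

theorem radiusMin_le_of_forall_ne {α : Type*} {k n m : ℕ} (e : α ≃ Fin n) (b : ℕ → α)
    (hb : ∀ x y, x ≠ y → ∃ i s, s ≤ k ∧ i + s < m ∧
      (b i = x ∧ b (i + s) = y ∨ b i = y ∧ b (i + s) = x)) :
    radiusMin k n ≤ m := by
  refine Nat.sInf_le ⟨fun i => e (b i), fun x y hxy => ?_⟩
  obtain ⟨i, s, hsk, hm, ⟨hx, hy⟩ | ⟨hy, hx⟩⟩ :=
    hb (e.symm x) (e.symm y) (e.symm.injective.ne hxy)
  · refine ⟨⟨i, by omega⟩, ⟨i + s, hm⟩, by simp [hx], by simp [hy], ?_⟩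
    rw [abs_le]; push_cast; omega
  · refine ⟨⟨i + s, hm⟩, ⟨i, by omega⟩, by simp [hx], by simp [hy], ?_⟩
    rw [abs_le]; push_cast; omega

def IsSignedCover {R : Type*} [Ring R] (g : R) (D : Finset R) : Prop :=
  ∀ δ : R, δ ≠ 0 → ∃ c ∈ D, δ = c ∨ δ = -c ∨ δ = g * c ∨ δ = -(g * c)

section BlockWalk

variable {p : ℕ}

def blockWalk (d : ℕ → ZMod p) (n : ℕ) : ZMod p :=
  (∑ j ∈ range (n / (p + 1)), d j) + ((n % (p + 1) : ℕ) : ZMod p) * d (n / (p + 1))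

/-- For `t = p + 1` this is the first entry of block `q + 1`, which fits since
`d q = (p + 1) * d q` in `ZMod p`. -/
theorem blockWalk_mul_add (d : ℕ → ZMod p) (q : ℕ) {t : ℕ} (ht : t ≤ p + 1) :
    blockWalk d ((p + 1) * q + t) = (∑ j ∈ range q, d j) + t * d q := by
  rcases ht.lt_or_eq with ht | rfl
  · rw [blockWalk, Nat.mul_add_div (by omega), Nat.div_eq_of_lt ht, Nat.mul_add_mod,
      Nat.mod_eq_of_lt ht, add_zero]
  · rw [blockWalk, ← mul_add_one, Nat.mul_div_cancel_left _ (by omega), Nat.mul_mod_right,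
      sum_range_succ]
    push_cast
    rw [ZMod.natCast_self]
    ring

theorem exists_blockWalk_add_eq [Fact p.Prime] (d : ℕ → ZMod p) {q : ℕ} (hq : d q ≠ 0)
    (x : ZMod p) {s : ℕ} (hs : s ≤ 2) :
    ∃ i, i + s ≤ (p + 1) * (q + 1) ∧ blockWalk d i = x ∧ blockWalk d (i + s) = x + s * d q := by
  set t := ((x - ∑ j ∈ range q, d j) / d q).val
  have ht : t < p := ZMod.val_lt _
  have hxt : x = (∑ j ∈ range q, d j) + t * d q := by
    rw [ZMod.natCast_val, ZMod.cast_id, div_mul_cancel₀ _ hq]; ring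
  refine ⟨(p + 1) * q + t, by nlinarith, ?_, ?_⟩
  · rw [blockWalk_mul_add d q (by omega), hxt]
  · rw [add_assoc, blockWalk_mul_add d q (by omega), hxt]
    push_cast; ring

theorem radiusMin_two_le_of_isSignedCover [Fact p.Prime] {D : Finset (ZMod p)}
    (hD : IsSignedCover 2 D) :
    radiusMin 2 p ≤ #D * (p + 1) + 1 := by
  have : NeZero p := ⟨(Fact.out : p.Prime).ne_zero⟩
  let d : ℕ → ZMod p := fun q => D.toList.getD q 0
  refine radiusMin_le_of_forall_ne (ZMod.finEquiv p).symm.toEquiv (blockWalk d) fun x y hxy => ?_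
  obtain ⟨c, hcD, hc⟩ := hD (y - x) (sub_ne_zero.mpr hxy.symm)
  obtain ⟨q, hq, rfl⟩ := List.getElem_of_mem (Finset.mem_toList.mpr hcD)
  have hc0 : D.toList[q] ≠ 0 := by
    rintro h; rw [h] at hc; apply hxy; simp_all [sub_eq_zero, eq_comm]
  have hdq : d q = D.toList[q] := List.getD_eq_getElem _ _ hq
  have hqD : q < #D := by simpa using hq
  have pair : ∀ x y : ZMod p, ∀ s : ℕ, s ≤ 2 → y - x = s * D.toList[q] →
      ∃ i, i + s < #D * (p + 1) + 1 ∧ blockWalk d i = x ∧ blockWalk d (i + s) = y := by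
    intro x y s hs hxy
    obtain ⟨i, hi, hx, hy⟩ := exists_blockWalk_add_eq d (hdq ▸ hc0) x hs
    refine ⟨i, by nlinarith, hx, by rw [hy, hdq, ← hxy]; ring⟩
  rcases hc with h | h | h | h
  · obtain ⟨i, hi, hx, hy⟩ := pair x y 1 (by norm_num) (by simpa using h)
    exact ⟨i, 1, by norm_num, hi, .inl ⟨hx, hy⟩⟩
  · obtain ⟨i, hi, hy, hx⟩ := pair y x 1 (by norm_num) (by simp; linear_combination -h)
    exact ⟨i, 1, by norm_num, hi, .inr ⟨hy, hx⟩⟩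
  · obtain ⟨i, hi, hx, hy⟩ := pair x y 2 le_rfl (by simpa using h)
    exact ⟨i, 2, le_rfl, hi, .inl ⟨hx, hy⟩⟩
  · obtain ⟨i, hi, hy, hx⟩ := pair y x 2 le_rfl (by push_cast; linear_combination -h)
    exact ⟨i, 2, le_rfl, hi, .inr ⟨hy, hx⟩⟩

end BlockWalk

section Sign

variable {G : Type*} [CommGroup G] [HasDistribNeg G]

theorem eq_or_eq_neg_of_mk_eq {u v : G} (h : (u : G ⧸ zpowers (-1 : G)) = v) :
    v = u ∨ v = -u := by
  obtain ⟨n, hn⟩ := mem_zpowers_iff.mp (QuotientGroup.eq.mp h)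
  rw [neg_one_zpow_eq_ite, eq_inv_mul_iff_mul_eq] at hn
  split_ifs at hn <;> simp [← hn]

theorem orderOf_eq_or_eq_two_mul_orderOf_mk (g : G) :
    orderOf g = orderOf (g : G ⧸ zpowers (-1 : G)) ∨
      orderOf g = 2 * orderOf (g : G ⧸ zpowers (-1 : G)) := by
  set M := orderOf (g : G ⧸ zpowers (-1 : G))
  have hMℓ : M ∣ orderOf g := orderOf_map_dvd (QuotientGroup.mk' _) g
  have hℓM : orderOf g ∣ 2 * M := by
    refine orderOf_dvd_of_pow_eq_one ?_
    have : ((g ^ M : G) : G ⧸ zpowers (-1 : G)) = ((1 : G) : G ⧸ zpowers (-1 : G)) := by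
      simp [M, pow_orderOf_eq_one]
    rw [mul_comm, pow_mul]
    rcases eq_or_eq_neg_of_mk_eq this.symm with h | h <;> simp [h]
  obtain ⟨a, ha⟩ := hMℓ
  rcases Nat.eq_zero_or_pos M with hM | hM
  · simp [ha, hM]
  rw [ha, mul_comm 2, Nat.mul_dvd_mul_iff_left hM, Nat.dvd_prime Nat.prime_two] at hℓM
  rcases hℓM with rfl | rfl <;> simp [ha, mul_comm]

end Sign

section UnitsModSign

abbrev UnitsModSign (p : ℕ) := (ZMod p)ˣ ⧸ zpowers (-1 : (ZMod p)ˣ)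

variable {p : ℕ} [Fact p.Prime]

theorem card_unitsModSign_mul_two (hp : p ≠ 2) :
    Nat.card (UnitsModSign p) * 2 = p - 1 := by
  have h2 : Nat.card (zpowers (-1 : (ZMod p)ˣ)) = 2 := by
    rw [Nat.card_zpowers, ← orderOf_units, Units.val_neg, Units.val_one, orderOf_neg_one,
      ZMod.ringChar_zmod_n, if_neg hp]
  rw [← h2, ← Subgroup.card_eq_card_quotient_mul_card_subgroup, Nat.card_eq_fintype_card,
    ZMod.card_units]

theorem exists_isSignedCover_card_le (g : (ZMod p)ˣ) {m : ℕ}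
    (hm : orderOf (g : UnitsModSign p) ≤ 2 * m) :
    ∃ D : Finset (ZMod p), IsSignedCover (g : ZMod p) D ∧
      #D ≤ (zpowers (g : UnitsModSign p)).index * m := by
  classical
  set γ : UnitsModSign p := (g : UnitsModSign p)
  let rep : (_ ⧸ zpowers γ) × ℕ → ZMod p := fun x => ((x.1.out.out * g ^ (2 * x.2) : (ZMod p)ˣ) : ZMod p)
  refine ⟨(univ ×ˢ range m).image rep, fun δ hδ => ?_, card_image_le.trans_eq (by
    rw [card_product, card_univ, card_range, index, Nat.card_eq_fintype_card])⟩
  set v := Units.mk0 δ hδ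
  set a : UnitsModSign p ⧸ zpowers γ := ((v : UnitsModSign p) : UnitsModSign p ⧸ zpowers γ)
  have hv : a.out⁻¹ * v ∈ zpowers γ := QuotientGroup.eq.mp a.out_eq'
  obtain ⟨j, hj, hγj⟩ := Finset.mem_image.mp (mem_zpowers_iff_mem_range_orderOf.mp hv)
  have hmk : ((a.out.out * g ^ j : (ZMod p)ˣ) : UnitsModSign p) = v := by
    rw [QuotientGroup.mk_mul, QuotientGroup.mk_pow, QuotientGroup.out_eq', hγj,
      mul_inv_cancel_left]
  obtain ⟨i, hi, hjc⟩ : ∃ i < m, ((a.out.out * g ^ j : (ZMod p)ˣ) : ZMod p) = rep (a, i) ∨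
      ((a.out.out * g ^ j : (ZMod p)ˣ) : ZMod p) = g * rep (a, i) := by
    have := mem_range.mp hj
    obtain ⟨i, rfl | rfl⟩ := Nat.even_or_odd' j
    · exact ⟨i, by omega, .inl rfl⟩
    · exact ⟨i, by omega, .inr (by simp only [rep, Units.val_mul, Units.val_pow_eq_pow_val]; ring)⟩
  refine ⟨rep (a, i), mem_image_of_mem _ (by simp [hi]), ?_⟩
  have hδv : δ = v := (Units.val_mk0 hδ).symm
  rcases eq_or_eq_neg_of_mk_eq hmk with h | h <;> rcases hjc with hc | hc <;>
    simp only [hδv, h, Units.val_neg, hc, true_or, or_true]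

end UnitsModSign

section Main

variable {p : ℕ} [Fact p.Prime]

theorem radiusMin_two_le_of_orderOf_le (hp : p ≠ 2) (g : (ZMod p)ˣ) (hg : (g : ZMod p) = 2)
    {m : ℕ} (hm : orderOf (g : UnitsModSign p) ≤ 2 * m) :
    (radiusMin 2 p : ℚ) ≤
      ((p : ℚ) + 1) * ((p : ℚ) - 1) / (2 * orderOf (g : UnitsModSign p)) * m + 1 := by
  set M := orderOf (g : UnitsModSign p)
  set N := (zpowers (g : UnitsModSign p)).index
  obtain ⟨D, hD, hDcard⟩ := exists_isSignedCover_card_le g hm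
  have hNM : N * M * 2 = p - 1 := by
    rw [← card_unitsModSign_mul_two hp, ← index_mul_card, Nat.card_zpowers]
  have hM : (0 : ℚ) < M := by exact_mod_cast orderOf_pos _
  have hp1 : (N : ℚ) * M * 2 = p - 1 := by
    rw [← Nat.cast_pred (Fact.out : p.Prime).pos, ← hNM]; push_cast; ring
  have hf : radiusMin 2 p ≤ N * m * (p + 1) + 1 :=
    (radiusMin_two_le_of_isSignedCover (hg ▸ hD)).trans (by gcongr)
  calc (radiusMin 2 p : ℚ) ≤ N * m * (p + 1) + 1 := by exact_mod_cast hf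
    _ = _ := by rw [← hp1]; field_simp

theorem radiusMin_two_le_of_odd (hp : p ≠ 2) (g : (ZMod p)ˣ) (hg : (g : ZMod p) = 2)
    (hM : Odd (orderOf (g : UnitsModSign p))) :
    (radiusMin 2 p : ℚ) ≤
      1 / 4 * ((p : ℚ) + 1) * ((p : ℚ) - 1) * (1 + 1 / orderOf (g : UnitsModSign p)) + 1 := by
  obtain ⟨k, hk⟩ := hM
  refine (radiusMin_two_le_of_orderOf_le hp g hg (m := k + 1) (by omega)).trans_eq ?_
  rw [hk]; push_cast; field_simp; ring

theorem radiusMin_two_le_of_even (hp : p ≠ 2) (g : (ZMod p)ˣ) (hg : (g : ZMod p) = 2)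
    (hM : Even (orderOf (g : UnitsModSign p))) :
    (radiusMin 2 p : ℚ) ≤ 1 / 4 * ((p : ℚ) + 1) * ((p : ℚ) - 1) + 1 := by
  obtain ⟨k, hk⟩ := hM
  have hk0 : 0 < k := by have := orderOf_pos (g : UnitsModSign p); omega
  refine (radiusMin_two_le_of_orderOf_le hp g hg (m := k) (by omega)).trans_eq ?_
  rw [hk]; push_cast; field_simp; ring

end Main

theorem stmt_3 (p : ℕ) (hp : p.Prime) (hodd : Odd p) (ℓ : ℕ)
    (hℓ : ℓ = orderOf (2 : ZMod p)) :
    (Odd ℓ →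
      (radiusMin 2 p : ℚ) ≤ (1 / 4) * ((p : ℚ) + 1) * ((p : ℚ) - 1) * (1 + 1 / (ℓ : ℚ)) + 1) ∧
    (ℓ % 4 = 2 →
      (radiusMin 2 p : ℚ) ≤ (1 / 4) * ((p : ℚ) + 1) * ((p : ℚ) - 1) * (1 + 2 / (ℓ : ℚ)) + 1) ∧
    (ℓ % 4 = 0 →
      (radiusMin 2 p : ℚ) ≤ (1 / 4) * ((p : ℚ) + 1) * ((p : ℚ) - 1) + 1) := by
  have : Fact p.Prime := ⟨hp⟩
  have hp2 : p ≠ 2 := by rintro rfl; exact (Nat.not_odd_iff_even.mpr even_two) hodd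
  have h2 : (2 : ZMod p) ≠ 0 := Ring.two_ne_zero (by rwa [ZMod.ringChar_zmod_n])
  set g := Units.mk0 (2 : ZMod p) h2
  have hgℓ : ℓ = orderOf g := by rw [hℓ, ← orderOf_units, Units.val_mk0]
  have hℓM := hgℓ ▸ orderOf_eq_or_eq_two_mul_orderOf_mk g
  have hM := orderOf_pos (g : UnitsModSign p)
  have bound_odd := radiusMin_two_le_of_odd hp2 g rfl
  have bound_even := radiusMin_two_le_of_even hp2 g rfl
  generalize orderOf (g : UnitsModSign p) = M at *
  have hpos : (0 : ℚ) ≤ ((p : ℚ) + 1) * ((p : ℚ) - 1) := by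
    have : (1 : ℚ) ≤ p := by exact_mod_cast hp.one_lt.le
    nlinarith
  refine ⟨fun hℓodd => ?_, fun hℓ2 => ?_, fun hℓ0 => bound_even ?_⟩
  · obtain rfl | rfl := hℓM
    · exact bound_odd hℓodd
    · exact absurd hℓodd (by simp)
  · obtain rfl | rfl := hℓM
    · refine (bound_even (Nat.even_iff.mpr (by omega))).trans ?_
      have : (0 : ℚ) ≤ 2 / ℓ := by positivity
      nlinarith
    · refine (bound_odd (Nat.odd_iff.mpr (by omega))).trans_eq ?_
      push_cast; field_simp
  · exact Nat.even_iff.mpr (by omega)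
end

section
/- Let p be a prime with p ≡ 5 (mod 8). Then f_2(p) ≤ (1/2)·binom(p,2) + (p+3)/4. -/
lemma cover_lemma (p : ℕ) [hp : Fact p.Prime] (hmod : p % 8 = 5) :
    ∃ g : (ZMod p)ˣ, orderOf g = p - 1 ∧
      ∀ d : ZMod p, d ≠ 0 → ∃ c ∈ Subgroup.zpowers (g ^ (4 : ℕ)),
        d = (c : (ZMod p)ˣ) ∨ d = -(c : (ZMod p)ˣ) ∨
        d = 2 * (c : (ZMod p)ˣ) ∨ d = -(2 * (c : (ZMod p)ˣ)) := by
  have hp5 : 5 ≤ p := by omega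
  obtain ⟨g, hg⟩ := IsCyclic.exists_generator (α := (ZMod p)ˣ)
  have hord : orderOf g = p - 1 := by
    rw [orderOf_eq_card_of_forall_mem_zpowers hg, Nat.card_eq_fintype_card, ZMod.card_units p]
  -- p - 1 = 4 * m with m odd
  obtain ⟨m, hm, hmodd⟩ : ∃ m, p - 1 = 4 * m ∧ m % 2 = 1 := ⟨(p-1)/4, by omega, by omega⟩
  -- g ^ (2*m) = -1
  have hgm : g ^ (2 * m) = (-1 : (ZMod p)ˣ) := by
    have h2 : (g ^ (2 * m)) ^ 2 = 1 := by
      rw [← pow_mul, show 2 * m * 2 = p - 1 by omega, ← hord, pow_orderOf_eq_one]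
    have hne : g ^ (2 * m) ≠ 1 := by
      intro h
      have hd := orderOf_dvd_of_pow_eq_one h
      rw [hord, hm] at hd
      have := Nat.le_of_dvd (by omega) hd
      omega
    have hval : ((g ^ (2*m) : (ZMod p)ˣ) : ZMod p) ^ 2 = 1 := by
      rw [← Units.val_pow_eq_pow_val, h2, Units.val_one]
    have hfac : (((g ^ (2*m) : (ZMod p)ˣ) : ZMod p) - 1) * (((g ^ (2*m) : (ZMod p)ˣ) : ZMod p) + 1) = 0 := by
      linear_combination hval
    rcases mul_eq_zero.mp hfac with h | h
    · exact absurd (Units.ext (by rw [Units.val_one]; exact sub_eq_zero.mp h)) hne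
    · ext
      rw [Units.val_neg, Units.val_one]
      exact eq_neg_of_add_eq_zero_left h
  -- 2 is a unit, and a nonsquare
  have h2ne : (2 : ZMod p) ≠ 0 := by
    intro h
    have : ((2:ℕ) : ZMod p) = 0 := by push_cast; exact h
    rw [ZMod.natCast_eq_zero_iff] at this
    have := Nat.le_of_dvd (by norm_num) this
    omega
  have hns : ¬ IsSquare (2 : ZMod p) := by
    rw [ZMod.exists_sq_eq_two_iff (by omega)]
    omega
  have h2u : IsUnit (2 : ZMod p) := isUnit_iff_ne_zero.mpr h2ne
  obtain ⟨e, he⟩ : ∃ e : ℤ, g ^ e = h2u.unit := Subgroup.mem_zpowers_iff.mp (hg h2u.unit)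
  have heodd : e % 2 = 1 := by
    rcases Int.emod_two_eq e with h | h
    · exfalso
      obtain ⟨f, hf⟩ : ∃ f, e = f + f := ⟨e/2, by omega⟩
      refine hns ⟨((g ^ f : (ZMod p)ˣ) : ZMod p), ?_⟩
      have : g ^ f * g ^ f = h2u.unit := by rw [← zpow_add, ← hf, he]
      calc (2 : ZMod p) = (h2u.unit : ZMod p) := h2u.unit_spec.symm
        _ = ((g^f * g^f : (ZMod p)ˣ) : ZMod p) := by rw [this]
        _ = _ := by rw [Units.val_mul]
    · exact h
  refine ⟨g, hord, ?_⟩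
  intro d hd
  have hdu : IsUnit d := isUnit_iff_ne_zero.mpr hd
  obtain ⟨k, hk⟩ : ∃ k : ℤ, g ^ k = hdu.unit := Subgroup.mem_zpowers_iff.mp (hg hdu.unit)
  -- choose the exponent z ≡ 0 mod 4
  have hz : ∃ z : ℤ, z % 4 = 0 ∧
      (z = k ∨ z = k + 2*m ∨ z = k - e ∨ z = k + 2*m - e) := by
    have h4 : k % 4 = 0 ∨ k % 4 = 1 ∨ k % 4 = 2 ∨ k % 4 = 3 := by omega
    have he4 : e % 4 = 1 ∨ e % 4 = 3 := by omega
    rcases h4 with h | h | h | h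
    · exact ⟨k, by omega, by tauto⟩
    · rcases he4 with h' | h'
      · exact ⟨k - e, by omega, by tauto⟩
      · exact ⟨k + 2*m - e, by omega, by tauto⟩
    · exact ⟨k + 2*m, by omega, by tauto⟩
    · rcases he4 with h' | h'
      · exact ⟨k + 2*m - e, by omega, by tauto⟩
      · exact ⟨k - e, by omega, by tauto⟩
  obtain ⟨z, hz4, hzcase⟩ := hz
  refine ⟨g ^ z, ?_, ?_⟩
  · refine Subgroup.mem_zpowers_iff.mpr ⟨z / 4, ?_⟩
    rw [← zpow_natCast g 4, ← zpow_mul]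
    congr 1
    omega
  · have hgm' : g ^ ((2*m : ℕ) : ℤ) = (-1 : (ZMod p)ˣ) := by
      rw [zpow_natCast]; exact_mod_cast hgm
    have hdval : (hdu.unit : ZMod p) = d := hdu.unit_spec
    have h2val : (h2u.unit : ZMod p) = 2 := h2u.unit_spec
    rcases hzcase with rfl | rfl | rfl | rfl
    · left
      rw [hk, hdval]
    · right; left
      have : g ^ (k + 2*(m:ℤ)) = -hdu.unit := by
        rw [zpow_add, hk]
        push_cast at hgm' ⊢
        rw [hgm', mul_neg_one]
      rw [show (k + 2*m : ℤ) = k + 2*(m:ℤ) by push_cast; ring, this, Units.val_neg, hdval, neg_neg]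
    · right; right; left
      have : h2u.unit * g ^ (k - e) = hdu.unit := by
        rw [← he, ← zpow_add, show e + (k - e) = k by ring]
        exact hk
      calc d = (hdu.unit : ZMod p) := hdval.symm
        _ = ((h2u.unit * g ^ (k-e) : (ZMod p)ˣ) : ZMod p) := by rw [this]
        _ = 2 * (g ^ (k-e) : (ZMod p)ˣ) := by rw [Units.val_mul, h2val]
    · right; right; right
      have h1 : h2u.unit * g ^ (k + 2*(m:ℤ) - e) = -hdu.unit := by
        rw [← he, ← zpow_add, show (e + (k + 2*(m:ℤ) - e)) = k + 2*(m:ℤ) by ring,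
          zpow_add, hk]
        push_cast at hgm' ⊢
        rw [hgm', mul_neg_one]
      have : ((h2u.unit * g ^ (k + 2*(m:ℤ) - e) : (ZMod p)ˣ) : ZMod p) = -d := by
        rw [h1, Units.val_neg, hdval]
      rw [Units.val_mul, h2val] at this
      rw [show (k + 2*m - e : ℤ) = k + 2*(m:ℤ) - e by push_cast; ring, this, neg_neg]

lemma exists_seq (p : ℕ) [hp : Fact p.Prime] (hmod : p % 8 = 5) :
    ∃ a : Fin ((p-1)/4 * (p+1) + 1) → Fin p,
      IsRadiusSeq 2 p ((p-1)/4 * (p+1) + 1) a := by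
  haveI : NeZero p := ⟨hp.out.ne_zero⟩
  obtain ⟨g, hord, hcov⟩ := cover_lemma p hmod
  set s : ℕ := (p-1)/4 with hsdef
  set L : ℕ := p + 1 with hLdef
  set M : ℕ := s * L + 1 with hMdef
  have hp5 : 5 ≤ p := by omega
  have hL0 : 0 < L := by omega
  -- cardinality of the subgroup of 4th powers
  have hcards : Fintype.card (Subgroup.zpowers (g ^ (4:ℕ))) = s := by
    rw [← Nat.card_eq_fintype_card, Nat.card_zpowers, orderOf_pow, hord]
    congr 1
    have : Nat.gcd (p-1) 4 = 4 := Nat.gcd_eq_right (by omega)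
    rw [this]
  have eH := Fintype.equivFinOfCardEq hcards
  set c : ℕ → (ZMod p)ˣ := fun t =>
    if h : t < s then ((eH.symm ⟨t, h⟩ : Subgroup.zpowers (g ^ (4:ℕ))) : (ZMod p)ˣ) else 1
    with hcdef
  set S : ℕ → ZMod p := fun t => ∑ i ∈ Finset.range t, ((c i : (ZMod p)ˣ) : ZMod p)
    with hSdef
  have hSsucc : ∀ t, S (t+1) = S t + c t := by
    intro t; rw [hSdef]; exact Finset.sum_range_succ _ t
  set V : ℕ → ZMod p := fun n => S (n / L) + (n % L : ℕ) * (c (n / L) : ZMod p) with hVdef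
  have hV : ∀ t r : ℕ, r ≤ p → V (L * t + r) = S t + (r : ZMod p) * (c t : ZMod p) := by
    intro t r hr
    have h1 : (L * t + r) / L = t := by
      rw [Nat.mul_add_div hL0, Nat.div_eq_of_lt (by omega), Nat.add_zero]
    have h2 : (L * t + r) % L = r := by
      rw [Nat.mul_add_mod, Nat.mod_eq_of_lt (by omega)]
    rw [hVdef]; simp only [h1, h2]
  have hVL : ∀ t r : ℕ, r ≤ p + 1 → V (L * t + r) = S t + (r : ZMod p) * (c t : ZMod p) := by
    intro t r hr
    rcases Nat.lt_or_ge r (p+1) with h | h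
    · exact hV t r (by omega)
    · have hr' : r = p + 1 := by omega
      subst hr'
      have h1 : L * t + (p+1) = L * (t+1) := by rw [hLdef]; ring
      rw [h1]
      have h2 : V (L * (t+1)) = S (t+1) := by
        have hd : (L * (t+1)) / L = t+1 := by
          rw [Nat.mul_div_cancel_left _ hL0]
        have hm : (L * (t+1)) % L = 0 := by
          simp [Nat.mul_mod_right]
        rw [hVdef]; simp only [hd, hm]
        push_cast; ring
      rw [h2, hSsucc]
      have : ((p:ℕ) + 1 : ZMod p) = 1 := by
        push_cast [ZMod.natCast_self]; ring
      push_cast at this ⊢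
      rw [this, one_mul]
  refine ⟨fun i => ⟨(V i.val).val, ZMod.val_lt _⟩, ?_⟩
  intro x y hxy
  set X : ZMod p := ((x : ℕ) : ZMod p) with hXdef
  set Y : ZMod p := ((y : ℕ) : ZMod p) with hYdef
  have hd : Y - X ≠ 0 := by
    rw [sub_ne_zero]
    intro h
    apply hxy
    have := congrArg ZMod.val h
    rwa [ZMod.val_natCast_of_lt y.isLt, ZMod.val_natCast_of_lt x.isLt, Fin.val_eq_val,
      eq_comm] at this
  obtain ⟨c₀, hc₀, hcase⟩ := hcov (Y - X) hd
  set t : Fin s := eH ⟨c₀, hc₀⟩ with htdef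
  have hct : c t.val = c₀ := by
    rw [hcdef]
    simp only [t.isLt, dif_pos]
    rw [htdef]
    simp
  -- the key construction: find adjacent positions for X and X + κ * c₀
  have key : ∀ X' Y' : ZMod p, ∀ κ : ℕ, 1 ≤ κ → κ ≤ 2 → Y' = X' + (κ : ZMod p) * c₀ →
      ∃ i j : Fin M, V i.val = X' ∧ V j.val = Y' ∧ j.val = i.val + κ := by
    intro X' Y' κ hκ1 hκ2 hY'
    set r : ℕ := ((X' - S t.val) * ((c₀⁻¹ : (ZMod p)ˣ) : ZMod p)).val with hrdef
    have hrp : r < p := ZMod.val_lt _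
    have hbound : L * t.val + r + κ ≤ s * L := by
      have h1 : L * (t.val + 1) ≤ L * s := Nat.mul_le_mul_left L t.isLt
      calc L * t.val + r + κ = L * t.val + (r + κ) := by ring
        _ ≤ L * t.val + L := Nat.add_le_add_left (by omega) _
        _ = L * (t.val + 1) := by ring
        _ ≤ L * s := h1
        _ = s * L := Nat.mul_comm L s
    have hi : L * t.val + r < M := Nat.lt_succ_of_le (le_trans (Nat.le_add_right _ _) hbound)
    have hj : L * t.val + r + κ < M := Nat.lt_succ_of_le hbound
    have hrc : ((r:ℕ) : ZMod p) * (c₀ : ZMod p) = X' - S t.val := by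
      rw [hrdef, ZMod.natCast_val, ZMod.cast_id, mul_assoc, ← Units.val_mul]
      simp
    refine ⟨⟨L * t.val + r, hi⟩, ⟨L * t.val + r + κ, hj⟩, ?_, ?_, rfl⟩
    · show V (L * t.val + r) = X'
      rw [hV t.val r (by omega), hct, hrc]
      ring
    · show V (L * t.val + r + κ) = Y'
      rw [Nat.add_assoc, hVL t.val (r + κ) (by omega), hct, hY']
      push_cast
      linear_combination hrc
  -- now finish, case by case
  have hax : ∀ (i : Fin M), V i.val = X → (⟨(V i.val).val, ZMod.val_lt _⟩ : Fin p) = x := by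
    intro i hi
    apply Fin.ext
    show (V i.val).val = x.val
    rw [hi, hXdef, ZMod.val_natCast_of_lt x.isLt]
  have hay : ∀ (i : Fin M), V i.val = Y → (⟨(V i.val).val, ZMod.val_lt _⟩ : Fin p) = y := by
    intro i hi
    apply Fin.ext
    show (V i.val).val = y.val
    rw [hi, hYdef, ZMod.val_natCast_of_lt y.isLt]
  have habs : ∀ (i j : Fin M) (κ : ℕ), κ ≤ 2 → j.val = i.val + κ →
      |(i.val : ℤ) - (j.val : ℤ)| ≤ ((2:ℕ) : ℤ) := by
    intro i j κ hκ hji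
    have h1 : (j.val : ℤ) = (i.val : ℤ) + κ := by exact_mod_cast hji
    rw [abs_sub_le_iff]
    omega
  rcases hcase with h | h | h | h
  · obtain ⟨i, j, hVi, hVj, hji⟩ := key X Y 1 (by norm_num) (by norm_num)
      (by push_cast; linear_combination h)
    exact ⟨i, j, hax i hVi, hay j hVj, habs i j 1 (by norm_num) hji⟩
  · obtain ⟨i, j, hVi, hVj, hji⟩ := key Y X 1 (by norm_num) (by norm_num)
      (by push_cast; linear_combination -h)
    exact ⟨j, i, hax j hVj, hay i hVi, by rw [abs_sub_comm]; exact habs i j 1 (by norm_num) hji⟩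
  · obtain ⟨i, j, hVi, hVj, hji⟩ := key X Y 2 (by norm_num) (by norm_num)
      (by push_cast; linear_combination h)
    exact ⟨i, j, hax i hVi, hay j hVj, habs i j 2 (by norm_num) hji⟩
  · obtain ⟨i, j, hVi, hVj, hji⟩ := key Y X 2 (by norm_num) (by norm_num)
      (by push_cast; linear_combination -h)
    exact ⟨j, i, hax j hVj, hay i hVi, by rw [abs_sub_comm]; exact habs i j 2 (by norm_num) hji⟩


theorem stmt_4 (p : ℕ) (hp : p.Prime) (hmod : p % 8 = 5) :
    (radiusMin 2 p : ℚ) ≤ (1 / 2) * (p.choose 2 : ℚ) + ((p : ℚ) + 3) / 4 := by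
  haveI : Fact p.Prime := ⟨hp⟩
  obtain ⟨a, ha⟩ := exists_seq p hmod
  have hle : radiusMin 2 p ≤ (p-1)/4 * (p+1) + 1 := Nat.sInf_le ⟨a, ha⟩
  obtain ⟨q, rfl⟩ : ∃ q, p = 8*q+5 := ⟨p/8, by omega⟩
  have e1 : (8*q+5-1)/4 = 2*q+1 := by omega
  rw [e1] at hle
  have hch : (8*q+5).choose 2 = (8*q+5)*(4*q+2) := by
    rw [Nat.choose_two_right, show (8*q+5)-1 = 8*q+4 by omega,
      show (8*q+5)*(8*q+4) = ((8*q+5)*(4*q+2))*2 by ring, Nat.mul_div_cancel _ (by norm_num)]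
  rw [hch]
  have h2 : (radiusMin 2 (8*q+5) : ℚ) ≤ (((2*q+1) * (8*q+5+1) + 1 : ℕ) : ℚ) := by
    exact_mod_cast hle
  refine le_trans h2 ?_
  push_cast
  ring_nf
  nlinarith [sq_nonneg (q:ℚ)]
end

section
/- The length f_2(n) of the shortest n-ary 2-radius sequence satisfies f_2(n) = (1/2)·binom(n,2) + O(n^{1.525}); that is, there exists a constant C > 0 such that for all n ≥ 2, |f_2(n) − (1/2)·n(n−1)/2| ≤ C·n^{1.525}. -/
/-- step pattern: `p+1` if `p` even, `p - 2u` if odd (0-indexed, used for `p < u`). -/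
def s0 (u p : ℕ) : ℤ := if p % 2 = 0 then (p : ℤ) + 1 else (p : ℤ) - 2 * u

/-- walk prefix sums (periodic step pattern of period `u`). -/
def Wint (u q : ℕ) : ℤ := ∑ p ∈ Finset.range q, s0 u (p % u)

lemma Wint_succ (u q : ℕ) : Wint u (q + 1) = Wint u q + s0 u (q % u) :=
  Finset.sum_range_succ _ _

lemma Wint_add_u (u : ℕ) : ∀ q, Wint u (q + u) = Wint u q + Wint u u := by
  intro q
  induction q with
  | zero => simp [Wint]
  | succ q ih =>
      have h : q + 1 + u = (q + u) + 1 := by omega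
      rw [h, Wint_succ, ih, Nat.add_mod_right, Wint_succ]
      ring

lemma Wint_mul (u p : ℕ) : ∀ i, Wint u (i * u + p) = Wint u p + i * Wint u u := by
  intro i
  induction i with
  | zero => simp
  | succ i ih =>
      have h : (i + 1) * u + p = (i * u + p) + u := by ring
      rw [h, Wint_add_u, ih]
      push_cast
      ring

lemma sum_s0 (u : ℕ) : ∀ k, ∑ p ∈ Finset.range (2 * k), s0 u p
    = 2 * (k : ℤ) ^ 2 + 2 * k - 2 * u * k - 2 * k := by
  intro k
  induction k with
  | zero => simp
  | succ k ih =>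
      have h : 2 * (k + 1) = (2 * k) + 1 + 1 := by ring
      rw [h, Finset.sum_range_succ, Finset.sum_range_succ, ih]
      have h1 : (2 * k) % 2 = 0 := by omega
      have h2 : (2 * k + 1) % 2 = 1 := by omega
      simp [s0, h1, h2]
      ring

lemma Wint_u (w : ℕ) : Wint (2 * w) (2 * w) = -2 * (w : ℤ) ^ 2 := by
  have h : Wint (2 * w) (2 * w) = ∑ p ∈ Finset.range (2 * w), s0 (2 * w) p := by
    apply Finset.sum_congr rfl
    intro p hp
    rw [Nat.mod_eq_of_lt (Finset.mem_range.mp hp)]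
  rw [h, sum_s0]
  push_cast
  ring

lemma S_unit (w : ℕ) :
    ((Wint (2 * w) (2 * w) : ℤ) : ZMod (8 * w + 1)) * (-32) = 1 := by
  rw [Wint_u]
  have hN : ((8 * w + 1 : ℕ) : ZMod (8 * w + 1)) = 0 := ZMod.natCast_self _
  push_cast at hN ⊢
  linear_combination (8 * (w : ZMod (8 * w + 1)) - 1) * hN

lemma hit (w p : ℕ) (T : ZMod (8 * w + 1)) :
    ∃ i : ℕ, i < 8 * w + 1 ∧
      ((Wint (2 * w) (i * (2 * w) + p) : ℤ) : ZMod (8 * w + 1)) = T := by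
  haveI : NeZero (8 * w + 1) := ⟨by omega⟩
  set S : ZMod (8 * w + 1) := ((Wint (2 * w) (2 * w) : ℤ) : ZMod (8 * w + 1)) with hS
  set Wp : ZMod (8 * w + 1) := ((Wint (2 * w) p : ℤ) : ZMod (8 * w + 1)) with hWp
  have hu : S * (-32) = 1 := S_unit w
  refine ⟨((T - Wp) * (-32)).val, ZMod.val_lt _, ?_⟩
  rw [Wint_mul]
  push_cast
  rw [ZMod.natCast_val, ZMod.cast_id]
  linear_combination (T - Wp) * hu

/-- total length of the constructed sequence over `ZMod (8w+1)`. -/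
def MM (w : ℕ) : ℕ := 2 * (8 * w + 1) + 2 * w * (8 * w + 1) + 2

/-- the constructed sequence. -/
def AA (w q : ℕ) : ZMod (8 * w + 1) :=
  if q < 2 * (8 * w + 1) then
    ((q / 2 : ℕ) : ZMod (8 * w + 1)) +
      (if q % 2 = 1 then ((4 * w : ℕ) : ZMod (8 * w + 1)) else 0)
  else ((Wint (2 * w) (q - 2 * (8 * w + 1)) : ℤ) : ZMod (8 * w + 1))

lemma AA_walk (w q : ℕ) (h : 2 * (8 * w + 1) ≤ q) :
    AA w q = ((Wint (2 * w) (q - 2 * (8 * w + 1)) : ℤ) : ZMod (8 * w + 1)) := by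
  rw [AA, if_neg (by omega)]

/-- helper: a distance-1 occurrence of step `s0 u p` starting anywhere we like. -/
lemma helper1 (w p : ℕ) (hp : p < 2 * w) (T : ZMod (8 * w + 1)) :
    ∃ q : ℕ, q + 1 < MM w ∧ AA w q = T ∧
      AA w (q + 1) = T + ((s0 (2 * w) p : ℤ) : ZMod (8 * w + 1)) := by
  obtain ⟨i, hi, hW⟩ := hit w p T
  refine ⟨2 * (8 * w + 1) + (i * (2 * w) + p), by
    have : i * (2 * w) ≤ (8 * w) * (2 * w) := Nat.mul_le_mul_right _ (by omega)
    simp only [MM]; nlinarith, ?_, ?_⟩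
  · rw [AA_walk _ _ (by omega)]
    have h : 2 * (8 * w + 1) + (i * (2 * w) + p) - 2 * (8 * w + 1) = i * (2 * w) + p := by omega
    rw [h, hW]
  · rw [AA_walk _ _ (by omega)]
    have h : 2 * (8 * w + 1) + (i * (2 * w) + p) + 1 - 2 * (8 * w + 1)
        = (i * (2 * w) + p) + 1 := by omega
    have hmod : ∀ p' : ℕ, p' < 2 * w → (i * (2 * w) + p') % (2 * w) = p' := by
      intro p' h'
      rw [Nat.mul_comm, Nat.mul_add_mod, Nat.mod_eq_of_lt h']
    rw [h, Wint_succ, hmod p hp]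
    push_cast
    rw [hW]

/-- helper: a distance-2 occurrence of `s0 u p + s0 u (p+1)`. -/
lemma helper2 (w p : ℕ) (hp : p + 1 < 2 * w) (T : ZMod (8 * w + 1)) :
    ∃ q : ℕ, q + 2 < MM w ∧ AA w q = T ∧
      AA w (q + 2) = T + ((s0 (2 * w) p + s0 (2 * w) (p + 1) : ℤ) : ZMod (8 * w + 1)) := by
  obtain ⟨i, hi, hW⟩ := hit w p T
  refine ⟨2 * (8 * w + 1) + (i * (2 * w) + p), by
    have : i * (2 * w) ≤ (8 * w) * (2 * w) := Nat.mul_le_mul_right _ (by omega)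
    simp only [MM]; nlinarith, ?_, ?_⟩
  · rw [AA_walk _ _ (by omega)]
    have h : 2 * (8 * w + 1) + (i * (2 * w) + p) - 2 * (8 * w + 1) = i * (2 * w) + p := by omega
    rw [h, hW]
  · rw [AA_walk _ _ (by omega)]
    have h : 2 * (8 * w + 1) + (i * (2 * w) + p) + 2 - 2 * (8 * w + 1)
        = ((i * (2 * w) + p) + 1) + 1 := by omega
    have hmod : ∀ p' : ℕ, p' < 2 * w → (i * (2 * w) + p') % (2 * w) = p' := by
      intro p' h'
      rw [Nat.mul_comm, Nat.mul_add_mod, Nat.mod_eq_of_lt h']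
    have h2 : (i * (2 * w) + p + 1) % (2 * w) = p + 1 := by
      rw [Nat.add_assoc]; exact hmod (p+1) hp
    rw [h, Wint_succ, Wint_succ, hmod p (by omega), h2]
    push_cast
    rw [hW]
    ring

lemma cover_half (w : ℕ) (X Y : ZMod (8 * w + 1))
    (hc1 : 1 ≤ (Y - X).val) (hc2 : (Y - X).val ≤ 4 * w) :
    ∃ q1 q2 : ℕ, q1 < MM w ∧ q2 < MM w ∧ AA w q1 = X ∧ AA w q2 = Y ∧
      q1 ≤ q2 + 2 ∧ q2 ≤ q1 + 2 := by
  haveI : NeZero (8 * w + 1) := ⟨by omega⟩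
  set c := (Y - X).val with hcdef
  have hY : Y = X + ((c : ℕ) : ZMod (8 * w + 1)) := by
    rw [hcdef, ZMod.natCast_val, ZMod.cast_id]; ring
  have hXlt := ZMod.val_lt X
  by_cases h4 : c = 4 * w
  · -- leftover segment covers difference 4w at distance 1
    refine ⟨2 * X.val, 2 * X.val + 1, by simp only [MM]; omega, by simp only [MM]; omega,
      ?_, ?_, by omega, by omega⟩
    · rw [AA, if_pos (by omega)]
      have e1 : 2 * X.val / 2 = X.val := by omega
      rw [e1, if_neg (show ¬(2 * X.val % 2 = 1) by omega), add_zero, ZMod.natCast_val, ZMod.cast_id]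
    · rw [AA, if_pos (by omega)]
      have e1 : (2 * X.val + 1) / 2 = X.val := by omega
      rw [e1, if_pos (show (2 * X.val + 1) % 2 = 1 by omega), ZMod.natCast_val, ZMod.cast_id, hY, h4]
  · rcases Nat.mod_two_eq_zero_or_one c with hpar | hpar
    · -- c even, 2 ≤ c ≤ 4w - 2 : distance-2 pair in the walk
      set p := 2 * w - c / 2 - 1 with hpdef
      have hp : p + 1 < 2 * w := by omega
      have hs : (s0 (2 * w) p + s0 (2 * w) (p + 1) : ℤ) = -(c : ℤ) := by
        rcases Nat.mod_two_eq_zero_or_one p with hp2 | hp2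
        · simp only [s0, if_pos hp2, if_neg (show ¬((p + 1) % 2 = 0) by omega)]
          push_cast; omega
        · simp only [s0, if_neg (show ¬(p % 2 = 0) by omega),
            if_pos (show (p + 1) % 2 = 0 by omega)]
          push_cast; omega
      obtain ⟨q, hq, hA1, hA2⟩ := helper2 w p hp Y
      refine ⟨q + 2, q, by omega, by omega, ?_, hA1, by omega, by omega⟩
      rw [hA2, hs, hY]; push_cast; ring
    · -- c odd : distance-1 pair in the walk
      by_cases hle : c ≤ 2 * w
      · set p := c - 1 with hpdef
        have hp : p < 2 * w := by omega
        have hs : (s0 (2 * w) p : ℤ) = (c : ℤ) := by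
          simp only [s0, if_pos (show p % 2 = 0 by omega)]
          omega
        obtain ⟨q, hq, hA1, hA2⟩ := helper1 w p hp X
        refine ⟨q, q + 1, by omega, by omega, hA1, ?_, by omega, by omega⟩
        rw [hA2, hs, hY]
        norm_cast
      · set p := 4 * w - c with hpdef
        have hp : p < 2 * w := by omega
        have hs : (s0 (2 * w) p : ℤ) = -(c : ℤ) := by
          simp only [s0, if_neg (show ¬(p % 2 = 0) by omega)]
          push_cast; omega
        obtain ⟨q, hq, hA1, hA2⟩ := helper1 w p hp Y
        refine ⟨q + 1, q, by omega, by omega, ?_, hA1, by omega, by omega⟩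
        rw [hA2, hs, hY]; push_cast; ring

lemma cover (w : ℕ) (X Y : ZMod (8 * w + 1)) (hXY : X ≠ Y) :
    ∃ q1 q2 : ℕ, q1 < MM w ∧ q2 < MM w ∧ AA w q1 = X ∧ AA w q2 = Y ∧
      q1 ≤ q2 + 2 ∧ q2 ≤ q1 + 2 := by
  haveI : NeZero (8 * w + 1) := ⟨by omega⟩
  have hne : Y - X ≠ 0 := sub_ne_zero.mpr (Ne.symm hXY)
  have h1 : 1 ≤ (Y - X).val := by
    rcases Nat.eq_zero_or_pos (Y - X).val with h | h
    · exact absurd ((ZMod.val_eq_zero _).mp h) hne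
    · exact h
  have hlt := ZMod.val_lt (Y - X)
  by_cases h : (Y - X).val ≤ 4 * w
  · exact cover_half w X Y h1 h
  · have hneg : (X - Y) = -(Y - X) := by ring
    have hval : (X - Y).val = (8 * w + 1) - (Y - X).val := by
      rw [hneg, ZMod.neg_val, if_neg hne]
    obtain ⟨q1, q2, hq1, hq2, hA1, hA2, hd1, hd2⟩ :=
      cover_half w Y X (by omega) (by omega)
    exact ⟨q2, q1, hq2, hq1, hA2, hA1, hd2, hd1⟩

lemma exists_seq_s5 (n : ℕ) (hn : 2 ≤ n) :
    ∃ a : Fin (MM ((n + 6) / 8)) → Fin n, IsRadiusSeq 2 n (MM ((n + 6) / 8)) a := by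
  set w := (n + 6) / 8 with hwdef
  have hN : n ≤ 8 * w + 1 := by omega
  haveI : NeZero (8 * w + 1) := ⟨by omega⟩
  refine ⟨fun q => if h : (AA w q.val).val < n then ⟨(AA w q.val).val, h⟩ else ⟨0, by omega⟩, ?_⟩
  intro x y hxy
  set X : ZMod (8 * w + 1) := ((x : ℕ) : ZMod (8 * w + 1)) with hXdef
  set Y : ZMod (8 * w + 1) := ((y : ℕ) : ZMod (8 * w + 1)) with hYdef
  have hXv : X.val = (x : ℕ) := ZMod.val_cast_of_lt (lt_of_lt_of_le x.isLt hN)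
  have hYv : Y.val = (y : ℕ) := ZMod.val_cast_of_lt (lt_of_lt_of_le y.isLt hN)
  have hXY : X ≠ Y := by
    intro h
    exact hxy (Fin.ext (by rw [← hXv, ← hYv, h]))
  obtain ⟨q1, q2, hq1, hq2, hA1, hA2, hd1, hd2⟩ := cover w X Y hXY
  refine ⟨⟨q1, hq1⟩, ⟨q2, hq2⟩, ?_, ?_, ?_⟩
  · simp only [hA1]
    rw [dif_pos (show X.val < n by omega)]
    exact Fin.ext hXv
  · simp only [hA2]
    rw [dif_pos (show Y.val < n by omega)]
    exact Fin.ext hYv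
  · rw [abs_le]
    constructor <;> [skip; skip] <;> · simp only []; push_cast; omega

lemma count_lb (n m : ℕ) (a : Fin m → Fin n) (h : IsRadiusSeq 2 n m a) :
    n * n - n ≤ 4 * m := by
  classical
  have main : ∀ x y : Fin n, x ≠ y → ∃ d : ℕ × ℕ,
      d ∈ (Finset.range m) ×ˢ ({0, 1, 3, 4} : Finset ℕ) ∧
      ∃ i j : Fin m, a i = x ∧ a j = y ∧ i.val = d.1 ∧ j.val + 2 = d.1 + d.2 := by
    intro x y hxy
    obtain ⟨i, j, hi, hj, hd⟩ := h x y hxy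
    have hij : i.val ≠ j.val := by
      intro he
      exact hxy (by rw [← hi, ← hj, Fin.ext he])
    rw [abs_le] at hd
    refine ⟨(i.val, j.val + 2 - i.val), ?_, i, j, hi, hj, rfl, by omega⟩
    simp only [Finset.mem_product, Finset.mem_range, Finset.mem_insert,
      Finset.mem_singleton]
    constructor
    · exact i.isLt
    · omega
  set F : Fin n × Fin n → ℕ × ℕ := fun z =>
    if hz : z.1 ≠ z.2 then (main z.1 z.2 hz).choose else (0, 0) with hF
  have hmaps : ∀ z ∈ (Finset.univ : Finset (Fin n)).offDiag,
      F z ∈ (Finset.range m) ×ˢ ({0, 1, 3, 4} : Finset ℕ) := by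
    intro z hz
    have hz' : z.1 ≠ z.2 := (Finset.mem_offDiag.mp hz).2.2
    simp only [hF, dif_pos hz']
    exact (main z.1 z.2 hz').choose_spec.1
  have hinj : Set.InjOn F ((Finset.univ : Finset (Fin n)).offDiag : Set _) := by
    intro z hz z' hz' he
    have h1 : z.1 ≠ z.2 := by simpa using hz
    have h2 : z'.1 ≠ z'.2 := by simpa using hz'
    simp only [hF, dif_pos h1, dif_pos h2] at he
    obtain ⟨i, j, hi, hj, hi2, hj2⟩ := (main z.1 z.2 h1).choose_spec.2
    obtain ⟨i', j', hi', hj', hi2', hj2'⟩ := (main z'.1 z'.2 h2).choose_spec.2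
    have : i = i' := Fin.ext (by rw [hi2, hi2', he])
    have hjj : j = j' := Fin.ext (by have := hj2; have := hj2'; rw [he] at hj2; omega)
    have e1 : z.1 = z'.1 := by rw [← hi, ← hi', this]
    have e2 : z.2 = z'.2 := by rw [← hj, ← hj', hjj]
    exact Prod.ext e1 e2
  have hcard := Finset.card_le_card_of_injOn F hmaps hinj
  rw [Finset.offDiag_card] at hcard
  simp only [Finset.card_univ, Fintype.card_prod, Fintype.card_fin] at hcard
  have : ((Finset.range m) ×ˢ ({0, 1, 3, 4} : Finset ℕ)).card = m * 4 := by
    rw [Finset.card_product, Finset.card_range]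
    norm_num
  omega

theorem stmt_5 :
    ∃ C : ℝ, 0 < C ∧ ∀ n : ℕ, 2 ≤ n →
      |(radiusMin 2 n : ℝ) - (1 / 2) * ((n : ℝ) * ((n : ℝ) - 1) / 2)| ≤
        C * (n : ℝ) ^ (1.525 : ℝ) := by
  refine ⟨1000, by norm_num, ?_⟩
  intro n hn
  set w := (n + 6) / 8 with hwdef
  obtain ⟨a, ha⟩ := exists_seq_s5 n hn
  have hub : MM w ∈ {m | ∃ a : Fin m → Fin n, IsRadiusSeq 2 n m a} := ⟨a, ha⟩
  set m := radiusMin 2 n with hmdef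
  have hm : m ≤ MM w := Nat.sInf_le hub
  have hmem : m ∈ {m | ∃ a : Fin m → Fin n, IsRadiusSeq 2 n m a} :=
    Nat.sInf_mem ⟨MM w, hub⟩
  obtain ⟨a', ha'⟩ := hmem
  have hlb := count_lb n m a' ha'
  -- integer bounds
  have h8 : 8 * w ≤ n + 6 := by omega
  have hMM : 4 * MM w ≤ n * n + 21 * n + 106 := by
    simp only [MM]
    nlinarith [h8]
  have hup : 4 * m ≤ n * n + 21 * n + 106 := le_trans (by omega) hMM
  have hlo : n * n ≤ 4 * m + n := by
    have : n ≤ n * n := Nat.le_mul_of_pos_left n (by omega)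
    omega
  -- real bounds
  have hnR : (2 : ℝ) ≤ (n : ℝ) := by exact_mod_cast hn
  have hr : (n : ℝ) ≤ (n : ℝ) ^ (1.525 : ℝ) := by
    calc (n : ℝ) = (n : ℝ) ^ (1 : ℝ) := (Real.rpow_one _).symm
    _ ≤ (n : ℝ) ^ (1.525 : ℝ) :=
        Real.rpow_le_rpow_of_exponent_le (by linarith) (by norm_num)
  have hrpos : (0 : ℝ) ≤ (n : ℝ) ^ (1.525 : ℝ) := Real.rpow_nonneg (by positivity) _
  have hupR : 4 * (m : ℝ) ≤ (n : ℝ) * n + 21 * n + 106 := by exact_mod_cast hup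
  have hloR : (n : ℝ) * n ≤ 4 * (m : ℝ) + n := by exact_mod_cast hlo
  rw [abs_le]
  constructor
  · nlinarith
  · nlinarith
end

section
/- Let k be a positive integer such that k+1 is prime, and let α be a primitive root modulo k+1. Then the discrete logarithm map, taking a ∈ {1, 2, …, k} to the unique x ∈ ℤ/kℤ such that a ≡ α^x (mod k+1), is a logarithm of length k. In particular, if k+1 is prime then a logarithm of length k exists. -/
/-- A logarithmic function of length `k`: `f (a*b) = f a + f b` whenever
`a, b ∈ {1, …, k}` and `a*b ≤ k`. -/
def IsLogFun (k : ℕ) (f : ℕ → ZMod k) : Prop :=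
  ∀ a b : ℕ, 1 ≤ a → 1 ≤ b → a ≤ k → b ≤ k → a * b ≤ k → f (a * b) = f a + f b

/-- A logarithm of length `k` is a logarithmic function that is a bijection
from `{1, …, k}` to `ℤ/kℤ`. -/
def IsLogarithm (k : ℕ) (f : ℕ → ZMod k) : Prop :=
  IsLogFun k f ∧ Set.BijOn f (Set.Icc 1 k) Set.univ

/-- A special KM-logarithm of length `k`: a logarithm such that either `k` is odd,
or `k` is even and `f m` is an even element of `ℤ/kℤ` for every divisor `m` of `k/2`. -/
def IsSpecialKM (k : ℕ) (f : ℕ → ZMod k) : Prop :=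
  IsLogarithm k f ∧ (Even k → ∀ m : ℕ, m ∣ k / 2 → ∃ y : ZMod k, f m = y + y)

theorem stmt_6 (k : ℕ) (hk : 0 < k) (hp : Nat.Prime (k + 1))
    (α : (ZMod (k + 1))ˣ) (hα : orderOf α = k)
    (f : ℕ → ZMod k)
    (hf : ∀ a : ℕ, 1 ≤ a → a ≤ k →
      ((α : ZMod (k + 1)) ^ (f a).val = (a : ZMod (k + 1)))) :
    IsLogarithm k f ∧ ∃ g : ℕ → ZMod k, IsLogarithm k g := by
  haveI : NeZero k := ⟨hk.ne'⟩
  have key : ∀ x y : ZMod k, (α : ZMod (k+1)) ^ x.val = (α : ZMod (k+1)) ^ y.val → x = y := by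
    intro x y h
    have hu : α ^ x.val = α ^ y.val := by
      ext
      simpa using h
    rw [pow_eq_pow_iff_modEq, hα] at hu
    have := (Nat.ModEq.eq_of_lt_of_lt hu (ZMod.val_lt x) (ZMod.val_lt y))
    exact ZMod.val_injective _ this
  have hmod : ∀ n : ℕ, (α : ZMod (k+1)) ^ (n % k) = (α : ZMod (k+1)) ^ n := by
    intro n
    have h : α ^ (n % k) = α ^ n :=
      pow_eq_pow_iff_modEq.2 (by rw [hα]; exact Nat.mod_modEq n k)
    simpa using congrArg Units.val h
  have hlog : IsLogarithm k f := by
    constructor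
    · intro a b ha hb hak hbk habk
      apply key
      rw [hf _ (Nat.one_le_iff_ne_zero.2 (by positivity)) habk, ZMod.val_add, hmod,
        pow_add, hf a ha hak, hf b hb hbk, Nat.cast_mul]
    · refine ⟨fun a _ => Set.mem_univ _, ?_, ?_⟩
      · intro a ha b hb hab
        obtain ⟨ha1, ha2⟩ := ha
        obtain ⟨hb1, hb2⟩ := hb
        have h1 : ((a : ℕ) : ZMod (k+1)) = ((b : ℕ) : ZMod (k+1)) := by
          rw [← hf a ha1 ha2, ← hf b hb1 hb2, hab]
        have := congrArg ZMod.val h1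
        rwa [ZMod.val_natCast_of_lt (by omega), ZMod.val_natCast_of_lt (by omega)] at this
      · intro x _
        set a : ℕ := ((α : ZMod (k+1)) ^ x.val).val with ha
        have hne : ((α : ZMod (k+1)) ^ x.val) ≠ 0 := by
          haveI : Fact (Nat.Prime (k+1)) := ⟨hp⟩
          exact pow_ne_zero _ (α.ne_zero)
        have ha1 : 1 ≤ a := by
          rcases Nat.eq_zero_or_pos a with h | h
          · exact absurd (by rwa [ZMod.val_eq_zero] at h) hne
          · exact h
        have hak : a ≤ k := by
          have := ZMod.val_lt ((α : ZMod (k+1)) ^ x.val)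
          omega
        refine ⟨a, ⟨ha1, hak⟩, ?_⟩
        apply key
        rw [hf a ha1 hak, ha, ZMod.natCast_val, ZMod.cast_id]
  exact ⟨hlog, f, hlog⟩
end

section
/- Let k be a positive integer such that 2k+1 is prime, let α be a primitive root modulo 2k+1, and let g : {1, …, k} → ℤ/2kℤ take a to the unique x ∈ ℤ/2kℤ with a ≡ α^x (mod 2k+1). Then the composition of g with the natural surjection ℤ/2kℤ → ℤ/kℤ (reduction of x mod 2k to x mod k) is a logarithm of length k. In particular, if 2k+1 is prime then a logarithm of length k exists. -/
theorem stmt_7 (k : ℕ) (hk : 0 < k) (hp : Nat.Prime (2 * k + 1))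
    (α : (ZMod (2 * k + 1))ˣ) (hα : orderOf α = 2 * k)
    (g : ℕ → ZMod (2 * k))
    (hg : ∀ a : ℕ, 1 ≤ a → a ≤ k →
      ((α : ZMod (2 * k + 1)) ^ (g a).val = (a : ZMod (2 * k + 1))))
    (f : ℕ → ZMod k)
    (hf : ∀ a : ℕ, f a = ZMod.castHom (dvd_mul_left k 2) (ZMod k) (g a)) :
    IsLogarithm k f ∧ ∃ h : ℕ → ZMod k, IsLogarithm k h := by
  haveI : NeZero (2 * k) := ⟨by omega⟩
  haveI : NeZero k := ⟨by omega⟩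
  haveI : Fact (Nat.Prime (2 * k + 1)) := ⟨hp⟩
  have key : ∀ x y : ZMod (2 * k),
      (α : ZMod (2 * k + 1)) ^ x.val = (α : ZMod (2 * k + 1)) ^ y.val → x = y := by
    intro x y h
    have h' : α ^ x.val = α ^ y.val := Units.ext (by push_cast; exact h)
    have hx : x.val ∈ Set.Iio (orderOf α) := by rw [hα]; exact x.val_lt
    have hy : y.val ∈ Set.Iio (orderOf α) := by rw [hα]; exact y.val_lt
    exact ZMod.val_injective _ (pow_injOn_Iio_orderOf hx hy h')
  have hmod : ∀ (m n : ℕ), m ≡ n [MOD 2 * k] →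
      (α : ZMod (2 * k + 1)) ^ m = (α : ZMod (2 * k + 1)) ^ n := by
    intro m n hn
    have : α ^ m = α ^ n := pow_eq_pow_iff_modEq.2 (by rwa [hα])
    exact_mod_cast congrArg (Units.val) this
  -- log property
  have hlog : IsLogFun k f := by
    intro a b ha hb hak hbk habk
    have hab1 : 1 ≤ a * b := Nat.one_le_iff_ne_zero.2 (by positivity)
    have e : g (a * b) = g a + g b := by
      apply key
      rw [hg (a * b) hab1 habk,
        hmod ((g a + g b).val) ((g a).val + (g b).val)
          (by rw [ZMod.val_add]; exact (Nat.mod_modEq _ _)),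
        pow_add, hg a ha hak, hg b hb hbk]
      push_cast
      ring
    rw [hf (a * b), hf a, hf b, e, map_add]
  -- α ^ k = -1
  have hαk : (α : ZMod (2 * k + 1)) ^ k = -1 := by
    have h2 : ((α : ZMod (2 * k + 1)) ^ k) * ((α : ZMod (2 * k + 1)) ^ k) = 1 := by
      rw [← pow_add, show k + k = 2 * k by ring]
      have : α ^ (2 * k) = 1 := by
        have h0 := pow_orderOf_eq_one α
        rwa [hα] at h0
      simpa using congrArg (Units.val) this
    rcases mul_self_eq_one_iff.1 h2 with h1 | h1
    · exfalso
      have : α ^ k = 1 := Units.ext (by push_cast; exact h1)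
      have := orderOf_dvd_of_pow_eq_one this
      rw [hα] at this
      exact absurd (Nat.le_of_dvd hk this) (by omega)
    · exact h1
  -- injectivity on Icc
  have hinj : Set.InjOn f (Set.Icc 1 k) := by
    rintro a ⟨ha1, hak⟩ b ⟨hb1, hbk⟩ hfe
    rw [hf a, hf b] at hfe
    have hcast : ((g a).val : ZMod k) = ((g b).val : ZMod k) := by
      rw [ZMod.castHom_apply, ZMod.castHom_apply] at hfe
      rw [ZMod.natCast_val, ZMod.natCast_val]
      exact hfe
    have hmodk : (g a).val % k = (g b).val % k := by
      rwa [ZMod.natCast_eq_natCast_iff, Nat.ModEq] at hcast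
    have hva : (g a).val < 2 * k := (g a).val_lt
    have hvb : (g b).val < 2 * k := (g b).val_lt
    -- vals are equal or differ by k
    have hcases : (g a).val = (g b).val ∨ (g a).val = (g b).val + k ∨ (g b).val = (g a).val + k := by
      have da := Nat.div_add_mod (g a).val k
      have db := Nat.div_add_mod (g b).val k
      have qa : (g a).val / k < 2 := Nat.div_lt_of_lt_mul (by omega)
      have qb : (g b).val / k < 2 := Nat.div_lt_of_lt_mul (by omega)
      interval_cases h1 : (g a).val / k <;> interval_cases h2 : (g b).val / k <;> omega
    have hap : (α : ZMod (2 * k + 1)) ^ (g a).val = (a : ZMod (2 * k + 1)) := hg a ha1 hak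
    have hbp : (α : ZMod (2 * k + 1)) ^ (g b).val = (b : ZMod (2 * k + 1)) := hg b hb1 hbk
    rcases hcases with h | h | h
    · -- g a = g b, so a ≡ b mod p
      have : (a : ZMod (2 * k + 1)) = (b : ZMod (2 * k + 1)) := by rw [← hap, ← hbp, h]
      have := (ZMod.natCast_eq_natCast_iff _ _ _).1 this
      rw [Nat.ModEq, Nat.mod_eq_of_lt (by omega), Nat.mod_eq_of_lt (by omega)] at this
      exact this
    · exfalso
      have : (a : ZMod (2 * k + 1)) = (b : ZMod (2 * k + 1)) * (-1) := by
        rw [← hap, ← hbp, ← hαk, h, pow_add]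
      have hsum : ((a + b : ℕ) : ZMod (2 * k + 1)) = 0 := by push_cast; rw [this]; ring
      have := (ZMod.natCast_eq_zero_iff _ _).1 hsum
      have := Nat.le_of_dvd (by omega) this
      omega
    · exfalso
      have : (b : ZMod (2 * k + 1)) = (a : ZMod (2 * k + 1)) * (-1) := by
        rw [← hap, ← hbp, ← hαk, h, pow_add]
      have hsum : ((a + b : ℕ) : ZMod (2 * k + 1)) = 0 := by push_cast; rw [this]; ring
      have := (ZMod.natCast_eq_zero_iff _ _).1 hsum
      have := Nat.le_of_dvd (by omega) this
      omega
  -- surjectivity via cardinality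
  have himg : f '' (Set.Icc 1 k) = Set.univ := by
    apply Set.eq_of_subset_of_ncard_le (Set.subset_univ _)
    · rw [Set.ncard_image_of_injOn hinj, Set.ncard_univ, Nat.card_eq_fintype_card]
      have : (Set.Icc 1 k).ncard = k := by
        rw [← Nat.card_coe_set_eq, Nat.card_eq_fintype_card]
        simp [Nat.card_Icc]
      simp [this, ZMod.card]
  have hbij : Set.BijOn f (Set.Icc 1 k) Set.univ :=
    ⟨fun _ _ => trivial, hinj, by rw [Set.SurjOn, himg]⟩
  exact ⟨⟨hlog, hbij⟩, f, hlog, hbij⟩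
end

section
/- Let k be a positive integer such that 8 divides k and p = k+1 is prime. Then there exists a special KM-logarithm of length k. -/
/-!
The units of `ℤ/pℤ`, `p = k + 1`, form a cyclic group of order `k`, so a discrete logarithm
with respect to a generator restricts to a logarithm of length `k` on `{1, …, k}`. The logarithm
of a square modulo `p` is even, and every divisor of `k` is a square modulo `p`: `2` is one
because `p ≡ 1 (mod 8)`, and an odd prime `q ∣ p - 1` is one by quadratic reciprocity, since
`p ≡ 1 (mod 4)` and `p ≡ 1 (mod q)`.
-/

section DiscreteLog

variable {A G₀ : Type*} [AddGroup A] [GroupWithZero G₀]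

open scoped Classical in
/-- `discreteLog ψ 0 = 0` is a junk value. -/
noncomputable def discreteLog (ψ : Multiplicative A ≃* G₀ˣ) (x : G₀) : A :=
  if hx : x = 0 then 0 else (ψ.symm (Units.mk0 x hx)).toAdd

variable (ψ : Multiplicative A ≃* G₀ˣ)

theorem discreteLog_of_ne_zero {x : G₀} (hx : x ≠ 0) :
    discreteLog ψ x = (ψ.symm (Units.mk0 x hx)).toAdd :=
  dif_neg hx

theorem discreteLog_zero : discreteLog ψ 0 = 0 :=
  dif_pos rfl

theorem discreteLog_mul {x y : G₀} (hx : x ≠ 0) (hy : y ≠ 0) :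
    discreteLog ψ (x * y) = discreteLog ψ x + discreteLog ψ y := by
  rw [discreteLog_of_ne_zero ψ (mul_ne_zero hx hy), discreteLog_of_ne_zero ψ hx,
    discreteLog_of_ne_zero ψ hy, Units.mk0_mul, map_mul, toAdd_mul]

theorem discreteLog_mul_self (x : G₀) :
    discreteLog ψ (x * x) = discreteLog ψ x + discreteLog ψ x := by
  by_cases hx : x = 0
  · simp [hx, discreteLog_zero]
  · exact discreteLog_mul ψ hx hx

theorem discreteLog_bijOn : Set.BijOn (discreteLog ψ) {x | x ≠ 0} Set.univ := by
  refine ⟨fun _ _ ↦ trivial, fun x hx y hy hxy ↦ ?_, fun a _ ↦ ?_⟩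
  · rw [discreteLog_of_ne_zero ψ hx, discreteLog_of_ne_zero ψ hy] at hxy
    simpa using congrArg Units.val (ψ.symm.injective (Multiplicative.toAdd.injective hxy))
  · refine ⟨ψ (Multiplicative.ofAdd a), (ψ _).ne_zero, ?_⟩
    rw [discreteLog_of_ne_zero ψ (ψ _).ne_zero, Units.mk0_val]
    simp

end DiscreteLog

theorem natCast_bijOn_Icc_ne_zero (k : ℕ) :
    Set.BijOn (fun n : ℕ ↦ (n : ZMod (k + 1))) (Set.Icc 1 k) {x | x ≠ 0} := by
  refine ⟨fun n hn ↦ ?_, fun m hm n hn hmn ↦ ?_, fun x hx ↦ ?_⟩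
  · exact fun h ↦ (Nat.le_of_dvd hn.1 ((ZMod.natCast_eq_zero_iff _ _).mp h)).not_gt
      (Nat.lt_succ_of_le hn.2)
  · simpa [ZMod.natCast_eq_natCast_iff', Nat.mod_eq_of_lt, Nat.lt_succ_of_le hm.2,
      Nat.lt_succ_of_le hn.2] using hmn
  · refine ⟨x.val, ⟨Nat.one_le_iff_ne_zero.mpr ((ZMod.val_ne_zero x).mpr hx),
      Nat.le_of_lt_succ (ZMod.val_lt x)⟩, ZMod.natCast_zmod_val x⟩

theorem nonempty_mulEquiv_units_zmod {k : ℕ} (hp : (k + 1).Prime) :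
    Nonempty (Multiplicative (ZMod k) ≃* (ZMod (k + 1))ˣ) := by
  have : Fact (k + 1).Prime := ⟨hp⟩
  have : NeZero k := ⟨by have := hp.two_le; omega⟩
  refine ⟨mulEquivOfCyclicCardEq ?_⟩
  rw [Nat.card_eq_fintype_card, Nat.card_eq_fintype_card, ZMod.card_units]
  simp

theorem isSquare_prime_of_dvd {k q : ℕ} (h8 : 8 ∣ k) (hp : (k + 1).Prime) (hq : q.Prime)
    (hqk : q ∣ k) : IsSquare (q : ZMod (k + 1)) := by
  have : Fact (k + 1).Prime := ⟨hp⟩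
  obtain ⟨c, rfl⟩ := h8
  rcases eq_or_ne q 2 with rfl | hq2
  · exact_mod_cast (ZMod.exists_sq_eq_two_iff (by omega)).mpr (Or.inl (by omega))
  · have : Fact q.Prime := ⟨hq⟩
    rw [ZMod.exists_sq_eq_prime_iff_of_mod_four_eq_one (by omega) hq2]
    have : ((8 * c + 1 : ℕ) : ZMod q) = 1 := by
      rw [Nat.cast_add, (ZMod.natCast_eq_zero_iff _ q).mpr hqk, Nat.cast_one, zero_add]
    rw [this]
    exact IsSquare.one

theorem isSquare_natCast_of_dvd {k m : ℕ} (h8 : 8 ∣ k) (hp : (k + 1).Prime) (hm : m ∣ k) :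
    IsSquare (m : ZMod (k + 1)) := by
  induction m using Nat.recOnMul with
  | zero => simp
  | one => simp
  | prime q hq => exact isSquare_prime_of_dvd h8 hp hq hm
  | mul a b iha ihb =>
    rw [Nat.cast_mul]
    exact (iha (dvd_of_mul_right_dvd hm)).mul (ihb (dvd_of_mul_left_dvd hm))

theorem stmt_8_general (k : ℕ) (h8 : 8 ∣ k) (hp : Nat.Prime (k + 1)) :
    ∃ f : ℕ → ZMod k, IsSpecialKM k f := by
  have := Fact.mk hp
  obtain ⟨ψ⟩ := nonempty_mulEquiv_units_zmod hp
  have hcast := natCast_bijOn_Icc_ne_zero k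
  refine ⟨fun n ↦ discreteLog ψ (n : ZMod (k + 1)), ⟨?_, (discreteLog_bijOn ψ).comp hcast⟩,
    fun _ m hm ↦ ?_⟩
  · intro a b ha hb hak hbk _
    simp only [Nat.cast_mul]
    exact discreteLog_mul ψ (hcast.mapsTo ⟨ha, hak⟩) (hcast.mapsTo ⟨hb, hbk⟩)
  · obtain ⟨c, hc⟩ := isSquare_natCast_of_dvd h8 hp (hm.trans (Nat.div_dvd_of_dvd (by omega)))
    exact ⟨discreteLog ψ c, by simp only [hc, discreteLog_mul_self]⟩

theorem stmt_8 (k : ℕ) (hk : 0 < k) (h8 : 8 ∣ k) (hp : Nat.Prime (k + 1)) :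
    ∃ f : ℕ → ZMod k, IsSpecialKM k f :=
  stmt_8_general k h8 hp
end

section
/- Let k be a positive integer such that p = 2k+1 is prime. Then there exists a special KM-logarithm of length k. -/
/-!
Let `p = 2k + 1`. Reducing a discrete logarithm of the cyclic group `(ℤ/p)ˣ` of order `2k`
modulo `k` gives a homomorphism `φ : (ℤ/p)ˣ → ℤ/k` whose kernel consists of square roots of `1`,
i.e. lies in `{±1}`. As no two elements of `{1, …, k}` are congruent up to sign mod `p`,
`a ↦ φ a` is injective on `{1, …, k}`, hence by counting a logarithm of length `k`.
If `k` is even then `p ≡ 1 (mod 4)`, and by quadratic reciprocity (and `p ≡ 1 (mod 8)` for the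
prime `2`) every divisor of `k / 2 = (p - 1) / 4` is a square mod `p`, so its logarithm is even.
-/

theorem ZMod.nsmul_eq_zero_of_castHom_eq_zero {m n : ℕ} {x : ZMod (m * n)}
    (hx : ZMod.castHom (dvd_mul_left n m) (ZMod n) x = 0) : m • x = 0 := by
  obtain ⟨a, rfl⟩ := ZMod.intCast_surjective x
  rw [map_intCast, ZMod.intCast_zmod_eq_zero_iff_dvd] at hx
  obtain ⟨c, rfl⟩ := hx
  rw [nsmul_eq_mul]
  push_cast
  rw [← mul_assoc, ← Nat.cast_mul, ZMod.natCast_self, zero_mul]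

theorem ZMod.natCast_ne_zero_of_pos_of_lt {a n : ℕ} (h0 : 0 < a) (h : a < n) :
    (a : ZMod n) ≠ 0 :=
  fun ha => h0.ne' (Nat.eq_zero_of_dvd_of_lt ((ZMod.natCast_eq_zero_iff a n).1 ha) h)

theorem IsCyclic.exists_monoidHom_zmod_pow_eq_one {G : Type*} [Group G] [hG : IsCyclic G]
    {m n : ℕ} (hcard : Nat.card G = m * n) :
    ∃ φ : G →* Multiplicative (ZMod n), ∀ g, φ g = 1 → g ^ m = 1 := by
  let e : G ≃* Multiplicative (ZMod (m * n)) := (hcard ▸ zmodCyclicMulEquiv hG).symm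
  refine ⟨(ZMod.castHom (dvd_mul_left n m) (ZMod n)).toAddMonoidHom.toMultiplicative.comp
    e.toMonoidHom, fun g hg => ?_⟩
  have : m • (e g).toAdd = 0 := ZMod.nsmul_eq_zero_of_castHom_eq_zero hg
  rw [← e.map_eq_one_iff, map_pow]
  exact congrArg Multiplicative.ofAdd this

theorem ZMod.isSquare_natCast_of_four_mul_dvd {p : ℕ} [Fact p.Prime] (hp : p % 4 = 1) {m : ℕ}
    (hm : 4 * m ∣ p - 1) : IsSquare (m : ZMod p) := by
  induction m using Nat.recOnMul with
  | zero => exact ⟨0, by simp⟩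
  | one => exact ⟨1, by simp⟩
  | prime q hq =>
    rcases eq_or_ne q 2 with rfl | hq2
    · exact (ZMod.exists_sq_eq_two_iff (by omega)).mpr (Or.inl (by omega))
    · have := Fact.mk hq
      have hpq : 1 ≡ p [MOD q] :=
        (Nat.modEq_iff_dvd' (by omega)).mpr ((dvd_mul_left q 4).trans hm)
      rw [ZMod.exists_sq_eq_prime_iff_of_mod_four_eq_one hp hq2,
        ← (ZMod.natCast_eq_natCast_iff _ _ _).mpr hpq, Nat.cast_one]
      exact IsSquare.one
  | mul a b iha ihb =>
    push_cast
    exact (iha ((mul_dvd_mul_left 4 (dvd_mul_right a b)).trans hm)).mul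
      (ihb ((mul_dvd_mul_left 4 (dvd_mul_left b a)).trans hm))

section LogOfUnitsHom

variable {G₀ A : Type*} [GroupWithZero G₀] [AddGroup A] (φ : G₀ˣ →* Multiplicative A)

open Classical in
noncomputable def logOfUnitsHom (x : G₀) : A :=
  if hx : x = 0 then 0 else (φ (Units.mk0 x hx)).toAdd

theorem logOfUnitsHom_of_ne_zero {x : G₀} (hx : x ≠ 0) :
    logOfUnitsHom φ x = (φ (Units.mk0 x hx)).toAdd :=
  dif_neg hx

theorem logOfUnitsHom_mul {x y : G₀} (hx : x ≠ 0) (hy : y ≠ 0) :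
    logOfUnitsHom φ (x * y) = logOfUnitsHom φ x + logOfUnitsHom φ y := by
  rw [logOfUnitsHom_of_ne_zero φ (mul_ne_zero hx hy), logOfUnitsHom_of_ne_zero φ hx,
    logOfUnitsHom_of_ne_zero φ hy, ← toAdd_mul, ← map_mul, Units.mk0_mul]

theorem logOfUnitsHom_eq_iff {x y : G₀} (hx : x ≠ 0) (hy : y ≠ 0) :
    logOfUnitsHom φ x = logOfUnitsHom φ y ↔ φ (Units.mk0 x hx / Units.mk0 y hy) = 1 := by
  rw [logOfUnitsHom_of_ne_zero φ hx, logOfUnitsHom_of_ne_zero φ hy, map_div, div_eq_one]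
  exact Multiplicative.toAdd.injective.eq_iff

end LogOfUnitsHom

theorem eq_of_natCast_eq_or_eq_neg {k a b : ℕ} (ha : a ∈ Set.Icc 1 k) (hb : b ∈ Set.Icc 1 k)
    (h : (a : ZMod (2 * k + 1)) = b ∨ (a : ZMod (2 * k + 1)) = -b) : a = b := by
  obtain ⟨ha1, hak⟩ := ha
  obtain ⟨hb1, hbk⟩ := hb
  rcases h with h | h
  · rwa [ZMod.natCast_eq_natCast_iff', Nat.mod_eq_of_lt (by omega),
      Nat.mod_eq_of_lt (by omega)] at h
  · refine absurd ?_ (ZMod.natCast_ne_zero_of_pos_of_lt (a := a + b) (n := 2 * k + 1)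
      (by omega) (by omega))
    rw [Nat.cast_add, h, neg_add_cancel]

theorem isLogarithm_logOfUnitsHom {k : ℕ} [Fact (2 * k + 1).Prime]
    (φ : (ZMod (2 * k + 1))ˣ →* Multiplicative (ZMod k)) (hφ : ∀ u, φ u = 1 → u ^ 2 = 1) :
    IsLogarithm k (fun a : ℕ => logOfUnitsHom φ (a : ZMod (2 * k + 1))) := by
  have : NeZero k := ⟨by rintro rfl; exact Nat.not_prime_one Fact.out⟩
  have hne (a : ℕ) (ha : a ∈ Set.Icc 1 k) : (a : ZMod (2 * k + 1)) ≠ 0 :=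
    ZMod.natCast_ne_zero_of_pos_of_lt ha.1 (by grind)
  have hinj : Set.InjOn (fun a : ℕ => logOfUnitsHom φ (a : ZMod (2 * k + 1))) (Set.Icc 1 k) := by
    intro a ha b hb hab
    have hsq := congrArg Units.val (hφ _ ((logOfUnitsHom_eq_iff φ (hne a ha) (hne b hb)).1 hab))
    simp only [Units.val_pow_eq_pow_val, Units.val_div_eq_div_val, Units.val_mk0,
      Units.val_one, sq_eq_one_iff, div_eq_one_iff_eq (hne b hb), div_eq_iff (hne b hb),
      neg_one_mul] at hsq
    exact eq_of_natCast_eq_or_eq_neg ha hb hsq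
  refine ⟨fun a b ha hb hak hbk _ => ?_, fun _ _ => trivial, hinj, ?_⟩
  · simp only [Nat.cast_mul]
    exact logOfUnitsHom_mul φ (hne a ⟨ha, hak⟩) (hne b ⟨hb, hbk⟩)
  · have := Finset.surjOn_of_injOn_of_card_le (s := Finset.Icc 1 k) (t := Finset.univ) _
      (by simp) (by rwa [Finset.coe_Icc]) (by simp)
    rwa [Finset.coe_Icc, Finset.coe_univ] at this

theorem stmt_9_general (k : ℕ) (hp : Nat.Prime (2 * k + 1)) :
    ∃ f : ℕ → ZMod k, IsSpecialKM k f := by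
  have := Fact.mk hp
  have hcard : Nat.card (ZMod (2 * k + 1))ˣ = 2 * k := by
    rw [Nat.card_eq_fintype_card, ZMod.card_units, Nat.add_sub_cancel]
  obtain ⟨φ, hφ⟩ := IsCyclic.exists_monoidHom_zmod_pow_eq_one hcard
  refine ⟨_, isLogarithm_logOfUnitsHom φ hφ, ?_⟩
  rintro ⟨t, rfl⟩ m hm
  rw [← two_mul, Nat.mul_div_cancel_left t two_pos] at hm
  have ht : t ≠ 0 := by rintro rfl; exact Nat.not_prime_one hp
  obtain ⟨c, hc⟩ := ZMod.isSquare_natCast_of_four_mul_dvd (p := 2 * (t + t) + 1) (by omega)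
    (m := m) (by rw [show 2 * (t + t) + 1 - 1 = 4 * t by omega]; exact mul_dvd_mul_left 4 hm)
  have hm0 : (m : ZMod (2 * (t + t) + 1)) ≠ 0 :=
    ZMod.natCast_ne_zero_of_pos_of_lt (Nat.pos_of_dvd_of_pos hm (by omega))
      (by have := Nat.le_of_dvd (by omega) hm; omega)
  have hc0 : c ≠ 0 := by rintro rfl; exact hm0 (hc.trans (mul_zero 0))
  exact ⟨logOfUnitsHom φ c, by simp only [hc, logOfUnitsHom_mul φ hc0 hc0]⟩

theorem stmt_9 (k : ℕ) (hk : 0 < k) (hp : Nat.Prime (2 * k + 1)) :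
    ∃ f : ℕ → ZMod k, IsSpecialKM k f :=
  stmt_9_general k hp
end

section
/- Let k be a fixed positive integer and let r = π(k) be the number of primes at most k. If there exists a logarithm of length k, then there exists a ℤ-tiling of ℤ^r by the cluster C_k. Moreover, the tiling may be taken to be a sublattice L of ℤ^r of index k, namely the kernel of the group homomorphism φ : ℤ^r → ℤ/kℤ sending the j-th standard basis vector to f(q_j), where f is the given logarithm and q_1 < … < q_r are the primes at most k. -/
/-- The set of primes in `{1, …, k}`. -/
def primesUpTo (k : ℕ) : Finset ℕ := (Finset.range (k + 1)).filter Nat.Prime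

/-- The cluster `C_k ⊆ ℤ^{π(k)}`: points with nonnegative coordinates
`(i_q)_q` (indexed by the primes `q ≤ k`) such that `∏ q ^ i_q ≤ k`. -/
def Cluster (k : ℕ) : Set (primesUpTo k → ℤ) :=
  {v | (∀ q, 0 ≤ v q) ∧ (∏ q : primesUpTo k, (q : ℕ) ^ (v q).toNat) ≤ k}

/-- A `ℤ`-tiling of `ℤ^{π(k)}` by the cluster `C_k`: the translates `x + C_k`,
`x ∈ L`, are pairwise disjoint with union everything; equivalently every point
lies in exactly one translate. -/
def IsZTiling (k : ℕ) (L : Set (primesUpTo k → ℤ)) : Prop :=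
  ∀ z : primesUpTo k → ℤ, ∃! x : primesUpTo k → ℤ, x ∈ L ∧ z - x ∈ Cluster k

/-! On the cluster, `φ v = ∑ v_q • f q` equals `f (∏ q ^ v_q)`, because a logarithmic function
is additive along prime factorisations of numbers `≤ k`. Unique factorisation makes
`v ↦ ∏ q ^ v_q` a bijection from `C_k` onto `{1, …, k}`, and `f` is a bijection from there onto
`ℤ/kℤ`; so `φ` maps `C_k` bijectively onto `ℤ/kℤ`. Hence each `z` has exactly one `c ∈ C_k` with
`φ c = φ z`, i.e. exactly one `x = z - c ∈ ker φ` with `z - x ∈ C_k`. -/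

theorem AddMonoidHom.existsUnique_mem_ker_sub_mem {G H : Type*} [AddCommGroup G] [AddGroup H]
    (φ : G →+ H) {C : Set G} (hC : Set.BijOn φ C Set.univ) (z : G) :
    ∃! x, φ x = 0 ∧ z - x ∈ C := by
  obtain ⟨c, hcC, hc⟩ := hC.surjOn (Set.mem_univ (φ z))
  refine ⟨z - c, ⟨by rw [map_sub, hc, sub_self], by rwa [sub_sub_cancel]⟩, ?_⟩
  rintro x ⟨hx, hxC⟩
  have : z - x = c := hC.injOn hxC hcC (by rw [map_sub, hx, sub_zero, hc])
  rw [← this, sub_sub_cancel]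

lemma mem_primesUpTo {k q : ℕ} : q ∈ primesUpTo k ↔ q.Prime ∧ q ≤ k := by
  simp [primesUpTo, and_comm]

lemma prod_primesUpTo_pow_factorization {k n : ℕ} (hn : n ≠ 0) (hnk : n ≤ k) :
    ∏ q : primesUpTo k, (q : ℕ) ^ n.factorization q = n := by
  rw [Finset.prod_coe_sort (primesUpTo k) (fun q => q ^ n.factorization q)]
  conv_rhs => rw [← Nat.prod_factorization_pow_eq_self hn]
  refine (Finset.prod_subset (fun q hq => ?_) fun q _ hq => ?_).symm
  · rw [Nat.support_factorization] at hq
    exact mem_primesUpTo.2 ⟨Nat.prime_of_mem_primeFactors hq,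
      (Nat.le_of_dvd (Nat.pos_of_ne_zero hn) (Nat.dvd_of_mem_primeFactors hq)).trans hnk⟩
  · rw [Finsupp.notMem_support_iff.mp hq, pow_zero]

lemma factorization_prod_primesUpTo_pow {k : ℕ} (v : primesUpTo k → ℕ) (p : primesUpTo k) :
    (∏ q : primesUpTo k, (q : ℕ) ^ v q).factorization p = v p := by
  have hprime (q : primesUpTo k) : (q : ℕ).Prime := (mem_primesUpTo.1 q.2).1
  rw [Nat.factorization_prod fun q _ => pow_ne_zero _ (hprime q).ne_zero, Finset.sum_apply',
    Fintype.sum_eq_single p fun q hq => ?_]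
  · simp [(hprime p).factorization_pow]
  · rw [(hprime q).factorization_pow, Finsupp.single_eq_of_ne' (Subtype.coe_injective.ne hq)]

lemma IsLogFun.eq_sum_factorization {k : ℕ} {f : ℕ → ZMod k} (hf : IsLogFun k f) :
    ∀ n, 0 < n → n ≤ k → f n = ∑ q : primesUpTo k, n.factorization q • f q := by
  refine Nat.recOnMul (by simp) (fun _ hk => ?_) (fun p hp _ hpk => ?_)
    (fun a b ha hb hab habk => ?_)
  · have h := hf 1 1 le_rfl le_rfl hk hk hk
    simp only [mul_one, left_eq_add] at h
    simp [h]
  · rw [hp.factorization, Fintype.sum_eq_single ⟨p, mem_primesUpTo.2 ⟨hp, hpk⟩⟩ fun q hq => ?_]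
    · simp
    · rw [Finsupp.single_eq_of_ne (Subtype.coe_injective.ne hq), zero_smul]
  · obtain ⟨ha0, hb0⟩ := CanonicallyOrderedAdd.mul_pos.1 hab
    have hak : a ≤ k := (Nat.le_mul_of_pos_right a hb0).trans habk
    have hbk : b ≤ k := (Nat.le_mul_of_pos_left b ha0).trans habk
    rw [hf a b ha0 hb0 hak hbk habk, ha ha0 hak, hb hb0 hbk,
      Nat.factorization_mul ha0.ne' hb0.ne', ← Finset.sum_add_distrib]
    simp [add_smul]

lemma bijOn_cluster_prod_pow (k : ℕ) :
    Set.BijOn (fun v => ∏ q : primesUpTo k, (q : ℕ) ^ (v q).toNat) (Cluster k) (Set.Icc 1 k) := by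
  refine ⟨fun v hv => ⟨?_, hv.2⟩, fun v hv w hw hvw => funext fun q => ?_, fun n hn => ?_⟩
  · exact Finset.prod_pos fun q _ => pow_pos (mem_primesUpTo.1 q.2).1.pos _
  · have h := congrArg (fun n => n.factorization q) hvw
    simp only [factorization_prod_primesUpTo_pow] at h
    rw [← Int.toNat_of_nonneg (hv.1 q), ← Int.toNat_of_nonneg (hw.1 q), h]
  · have hprod := prod_primesUpTo_pow_factorization (Nat.one_le_iff_ne_zero.1 hn.1) hn.2
    refine ⟨fun q => n.factorization q, ⟨fun q => by positivity, ?_⟩, ?_⟩ <;>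
      simp only [Int.toNat_natCast, hprod]
    exact hn.2

lemma IsLogFun.linearCombination_eq_of_mem_cluster {k : ℕ} {f : ℕ → ZMod k} (hf : IsLogFun k f)
    {v : primesUpTo k → ℤ} (hv : v ∈ Cluster k) :
    Fintype.linearCombination ℤ (fun q : primesUpTo k => f q) v
      = f (∏ q : primesUpTo k, (q : ℕ) ^ (v q).toNat) := by
  obtain ⟨hn0, hnk⟩ := (bijOn_cluster_prod_pow k).mapsTo hv
  rw [hf.eq_sum_factorization _ hn0 hnk, Fintype.linearCombination_apply]
  refine Finset.sum_congr rfl fun q _ => ?_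
  rw [factorization_prod_primesUpTo_pow, ← natCast_zsmul, Int.toNat_of_nonneg (hv.1 q)]

theorem stmt_10_general (k : ℕ) (f : ℕ → ZMod k) (hf : IsLogarithm k f) :
    IsZTiling k {v : primesUpTo k → ℤ | ∑ q : primesUpTo k, (v q) • f (q : ℕ) = 0} ∧
    -- `φ` is surjective onto `ℤ/kℤ`, so its kernel is a sublattice of index `k`
    Function.Surjective (fun v : primesUpTo k → ℤ => ∑ q : primesUpTo k, (v q) • f (q : ℕ)) ∧
    ∃ L : Set (primesUpTo k → ℤ), IsZTiling k L := by
  set φ := Fintype.linearCombination ℤ (fun q : primesUpTo k => f q)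
  have hφ : Set.BijOn φ (Cluster k) Set.univ :=
    (hf.2.comp (bijOn_cluster_prod_pow k)).congr fun v hv =>
      (hf.1.linearCombination_eq_of_mem_cluster hv).symm
  have tiling : IsZTiling k {v | ∑ q : primesUpTo k, v q • f q = 0} :=
    φ.toAddMonoidHom.existsUnique_mem_ker_sub_mem hφ
  refine ⟨tiling, fun y => ?_, _, tiling⟩
  obtain ⟨v, -, hv⟩ := hφ.surjOn (Set.mem_univ y)
  exact ⟨v, hv⟩

/-- If a logarithm of length `k` exists then there is a `ℤ`-tiling of
`ℤ^{π(k)}` by `C_k`; moreover the tiling may be taken to be the kernel of the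
homomorphism `φ : ℤ^{π(k)} → ℤ/kℤ` sending the basis vector at prime `q` to `f q`,
a sublattice of index `k`. -/
theorem stmt_10 (k : ℕ) (hk : 0 < k) (f : ℕ → ZMod k) (hf : IsLogarithm k f) :
    IsZTiling k {v : primesUpTo k → ℤ | ∑ q : primesUpTo k, (v q) • f (q : ℕ) = 0} ∧
    -- `φ` is surjective onto `ℤ/kℤ`, so its kernel is a sublattice of index `k`
    Function.Surjective (fun v : primesUpTo k → ℤ => ∑ q : primesUpTo k, (v q) • f (q : ℕ)) ∧
    ∃ L : Set (primesUpTo k → ℤ), IsZTiling k L :=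
  stmt_10_general k f hf
end

section
/- Let k be a positive integer and let p be a k-radius prime. Then there exists a p-ary k-radius sequence of length ((p−1)/(2k))·(p+k−1) + 1; in particular f_k(p) ≤ ((p−1)/(2k))·(p+k−1) + 1. -/
/-- A prime `p` is a `k`-radius prime if `p ≡ 1 (mod 2k)` and the elements
`1^{(p-1)/k}, 2^{(p-1)/k}, …, k^{(p-1)/k}` of `(ℤ/pℤ)^*` are pairwise distinct. -/
def IsRadiusPrime (k p : ℕ) : Prop :=
  p.Prime ∧ p % (2 * k) = 1 ∧
    ∀ a b : ℕ, 1 ≤ a → a ≤ k → 1 ≤ b → b ≤ k →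
      (a : ZMod p) ^ ((p - 1) / k) = (b : ZMod p) ^ ((p - 1) / k) → a = b

/-!
Write `p - 1 = 2kN`, `M = (p-1)/k = 2N`, and fix a generator `g` of `(ℤ/pℤ)ˣ`. The `k` distinct
values `1^M, …, k^M` are `k`-th roots of unity, hence all of them. So for every nonzero `e` there
is `1 ≤ t ≤ k` with `e^M = t^M`; then `e/t` is an `M`-th root of unity, i.e. a power of `g^k`, and
as `(g^k)^N = -1` we get `e = ± t · (g^k)^j` with `t ≤ k`, `j < N`.

The sequence is a walk in `ℤ/pℤ` made of `N` blocks of `p + k - 1` steps, every step of block `j`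
being `(g^k)^j`. Along block `j` each residue `x` is followed, `t ≤ k` places later, by
`x + t · (g^k)^j`; so every nonzero difference, hence every pair of distinct symbols, occurs
within distance `k`.
-/

def stepWalk {G : Type*} [AddMonoid G] (Q : ℕ) (d : ℕ → G) : ℕ → G
  | 0 => 0
  | m + 1 => stepWalk Q d m + d (m / Q)

lemma stepWalk_mul_add {G : Type*} [AddMonoid G] (Q : ℕ) (d : ℕ → G) (j : ℕ) {r : ℕ}
    (hr : r ≤ Q) : stepWalk Q d (j * Q + r) = stepWalk Q d (j * Q) + r • d j := by
  induction r with
  | zero => simp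
  | succ r ih =>
    have hdiv : (j * Q + r) / Q = j := by
      rw [add_comm, Nat.add_mul_div_right _ _ (by omega), Nat.div_eq_of_lt (by omega), zero_add]
    rw [← add_assoc, stepWalk, ih (by omega), hdiv, succ_nsmul, add_assoc]

lemma exists_stepWalk_eq_and_eq_add {n k N : ℕ} [NeZero n] (d : ℕ → (ZMod n)ˣ) (x : ZMod n)
    {t j : ℕ} (ht : t ≤ k) (hj : j < N) :
    ∃ i i' : ℕ, i < N * (n + k - 1) + 1 ∧ i' < N * (n + k - 1) + 1 ∧ |(i : ℤ) - i'| ≤ k ∧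
      stepWalk (n + k - 1) (fun l => (d l : ZMod n)) i = x ∧
      stepWalk (n + k - 1) (fun l => (d l : ZMod n)) i' = x + t * d j := by
  set Q := n + k - 1
  obtain ⟨r, hrn, hr⟩ : ∃ r < n,
      (r : ZMod n) * d j = x - stepWalk Q (fun l => (d l : ZMod n)) (j * Q) :=
    ⟨((x - stepWalk Q (fun l => (d l : ZMod n)) (j * Q)) * ↑(d j)⁻¹).val,
      ZMod.val_lt _,
      by simp only [ZMod.natCast_zmod_val, mul_assoc, Units.inv_mul, mul_one]⟩
  have hblock : (j + 1) * Q ≤ N * Q := Nat.mul_le_mul_right Q hj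
  refine ⟨j * Q + r, j * Q + r + t, by rw [add_mul] at hblock; omega,
    by rw [add_mul] at hblock; omega, by rw [abs_le]; push_cast; omega, ?_, ?_⟩
  · rw [stepWalk_mul_add _ _ _ (by omega), nsmul_eq_mul, hr]
    ring
  · rw [add_assoc, stepWalk_mul_add _ _ _ (by omega), nsmul_eq_mul, Nat.cast_add, add_mul,
      hr]
    ring

theorem isRadiusSeq_stepWalk {n k N : ℕ} [NeZero n] (d : ℕ → (ZMod n)ˣ)
    (hcover : ∀ e : ZMod n, e ≠ 0 → ∃ t ≤ k, ∃ j < N, e = t * d j ∨ -e = t * d j) :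
    IsRadiusSeq k n (N * (n + k - 1) + 1) fun i =>
      (ZMod.finEquiv n).symm (stepWalk (n + k - 1) (fun l => (d l : ZMod n)) i) := by
  intro x y hxy
  set X := ZMod.finEquiv n x
  set Y := ZMod.finEquiv n y
  have hXY : Y - X ≠ 0 := sub_ne_zero.mpr fun h => hxy ((ZMod.finEquiv n).injective h).symm
  obtain ⟨t, ht, j, hj, hdiff | hdiff⟩ := hcover _ hXY
  · obtain ⟨i, i', hi, hi', hii', hsi, hsi'⟩ := exists_stepWalk_eq_and_eq_add d X ht hj
    refine ⟨⟨i, hi⟩, ⟨i', hi'⟩, ?_, ?_, hii'⟩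
    · simp [hsi, X]
    · simp [hsi', ← hdiff, X, Y]
  · obtain ⟨i, i', hi, hi', hii', hsi, hsi'⟩ := exists_stepWalk_eq_and_eq_add d Y ht hj
    refine ⟨⟨i', hi'⟩, ⟨i, hi⟩, ?_, ?_, by rwa [abs_sub_comm]⟩
    · simp [hsi', ← hdiff, X, Y]
    · simp [hsi, Y]

lemma ZMod.exists_pow_eq_natCast_pow {p k : ℕ} [Fact p.Prime] (hk : 0 < k) (hkp : k ∣ p - 1)
    (hinj : Set.InjOn (fun a : ℕ => (a : ZMod p) ^ ((p - 1) / k)) (Set.Icc 1 k)) {e : ZMod p}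
    (he : e ≠ 0) : ∃ t ∈ Set.Icc 1 k, e ^ ((p - 1) / k) = (t : ZMod p) ^ ((p - 1) / k) := by
  have hpow : ∀ z : ZMod p, z ≠ 0 →
      z ^ ((p - 1) / k) ∈ Polynomial.nthRootsFinset k (1 : ZMod p) := by
    intro z hz
    rw [Polynomial.mem_nthRootsFinset hk, ← pow_mul, Nat.div_mul_cancel hkp]
    exact ZMod.pow_card_sub_one_eq_one hz
  have hkp' : k < p := by
    have := Nat.le_of_dvd (Nat.sub_pos_of_lt (Fact.out : p.Prime).one_lt) hkp
    omega
  have hcast : ∀ t ∈ Finset.Icc 1 k, (t : ZMod p) ≠ 0 := by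
    intro t ht hzero
    rw [Finset.mem_Icc] at ht
    have := Nat.le_of_dvd (by omega) ((ZMod.natCast_eq_zero_iff t p).mp hzero)
    omega
  have hcard : (Polynomial.nthRootsFinset k (1 : ZMod p)).card ≤ (Finset.Icc 1 k).card := by
    classical
    rw [Nat.card_Icc, Nat.add_sub_cancel, Polynomial.nthRootsFinset_def]
    exact (Multiset.toFinset_card_le _).trans (Polynomial.card_nthRoots k 1)
  obtain ⟨t, ht, heq⟩ := Finset.surjOn_of_injOn_of_card_le _
    (fun t ht => hpow _ (hcast t ht)) (by simpa using hinj) hcard (hpow e he)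
  exact ⟨t, by simpa using ht, heq.symm⟩

lemma exists_lt_eq_pow_pow_of_pow_eq_one {G : Type*} [Group G] [Finite G] {g : G}
    (hg : ∀ x, x ∈ Subgroup.zpowers g) {k M : ℕ} (hcard : Nat.card G = k * M) (hM : 0 < M)
    {u : G} (hu : u ^ M = 1) : ∃ s < M, u = (g ^ k) ^ s := by
  obtain ⟨a, rfl : g ^ a = u⟩ := mem_powers_iff_mem_zpowers.mpr (hg u)
  have horder : orderOf g = k * M := (orderOf_eq_card_of_forall_mem_zpowers hg).trans hcard
  have hka : k ∣ a := by
    have : k * M ∣ a * M := horder ▸ orderOf_dvd_of_pow_eq_one (by rw [pow_mul, hu])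
    exact Nat.dvd_of_mul_dvd_mul_right hM this
  obtain ⟨s, rfl⟩ := hka
  have hgkM : (g ^ k) ^ M = 1 := by rw [← pow_mul, ← horder, pow_orderOf_eq_one]
  exact ⟨s % M, Nat.mod_lt _ hM, by rw [pow_mul, ← pow_eq_pow_mod _ hgkM]⟩

lemma Units.val_pow_eq_neg_one_of_orderOf_eq_two_mul {R : Type*} [Ring R] [NoZeroDivisors R]
    {h : Rˣ} {n : ℕ} (hn : 0 < n) (hord : orderOf h = 2 * n) : ((h ^ n : Rˣ) : R) = -1 := by
  have hsq : (h ^ n) ^ 2 = 1 := by rw [← pow_mul, mul_comm, ← hord, pow_orderOf_eq_one]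
  have hne : h ^ n ≠ 1 := fun h1 => by have := orderOf_le_of_pow_eq_one hn h1; omega
  have hsq' : ((h ^ n : Rˣ) : R) ^ 2 = 1 := by
    rw [← Units.val_pow_eq_pow_val, hsq, Units.val_one]
  exact (sq_eq_one_iff.mp hsq').resolve_left fun h1 => hne (Units.ext h1)

lemma ZMod.exists_eq_natCast_mul_pow_pow {p k : ℕ} [Fact p.Prime] (hk : 0 < k)
    (hkp : k ∣ p - 1)
    (hinj : Set.InjOn (fun a : ℕ => (a : ZMod p) ^ ((p - 1) / k)) (Set.Icc 1 k))
    {g : (ZMod p)ˣ} (hg : ∀ x, x ∈ Subgroup.zpowers g) {e : ZMod p} (he : e ≠ 0) :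
    ∃ t ≤ k, ∃ s < (p - 1) / k, e = t * ((g ^ k) ^ s : (ZMod p)ˣ) := by
  have hp1 : 0 < p - 1 := Nat.sub_pos_of_lt (Fact.out : p.Prime).one_lt
  obtain ⟨t, ⟨-, htk⟩, hpow⟩ := exists_pow_eq_natCast_pow hk hkp hinj he
  have ht0 : (t : ZMod p) ≠ 0 := by
    rintro h
    rw [h, zero_pow (Nat.div_pos (Nat.le_of_dvd hp1 hkp) hk).ne'] at hpow
    exact pow_ne_zero _ he hpow
  set u : (ZMod p)ˣ := Units.mk0 (e / t) (div_ne_zero he ht0)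
  have hu : u ^ ((p - 1) / k) = 1 := Units.ext <| by
    simp [u, div_pow, hpow, pow_ne_zero _ ht0]
  have hcard : Nat.card (ZMod p)ˣ = k * ((p - 1) / k) := by
    rw [Nat.card_eq_fintype_card, ZMod.card_units, Nat.mul_div_cancel' hkp]
  obtain ⟨s, hs, hus⟩ := exists_lt_eq_pow_pow_of_pow_eq_one hg hcard
    (Nat.div_pos (Nat.le_of_dvd hp1 hkp) hk) hu
  refine ⟨t, htk, s, hs, ?_⟩
  rw [← hus, Units.val_mk0]
  field_simp

lemma ZMod.exists_eq_natCast_mul_or_neg {p k N : ℕ} [Fact p.Prime] (hk : 0 < k)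
    (hpN : p - 1 = 2 * k * N)
    (hinj : Set.InjOn (fun a : ℕ => (a : ZMod p) ^ ((p - 1) / k)) (Set.Icc 1 k))
    {g : (ZMod p)ˣ} (hg : ∀ x, x ∈ Subgroup.zpowers g) {e : ZMod p} (he : e ≠ 0) :
    ∃ t ≤ k, ∃ j < N,
      e = t * ((g ^ k) ^ j : (ZMod p)ˣ) ∨ -e = t * ((g ^ k) ^ j : (ZMod p)ˣ) := by
  obtain ⟨t, htk, s, hs, he_eq⟩ :=
    exists_eq_natCast_mul_pow_pow hk ⟨2 * N, by rw [hpN]; ring⟩ hinj hg he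
  rw [hpN, mul_comm 2 k, mul_assoc, Nat.mul_div_cancel_left _ hk] at hs
  refine ⟨t, htk, ?_⟩
  rcases lt_or_ge s N with hsN | hsN
  · exact ⟨s, hsN, Or.inl he_eq⟩
  · obtain ⟨j, rfl⟩ := Nat.exists_eq_add_of_le hsN
    have hneg : (((g ^ k) ^ N : (ZMod p)ˣ) : ZMod p) = -1 := by
      rw [← pow_mul]
      refine Units.val_pow_eq_neg_one_of_orderOf_eq_two_mul (Nat.mul_pos hk (by omega)) ?_
      rw [orderOf_eq_card_of_forall_mem_zpowers hg, Nat.card_eq_fintype_card, ZMod.card_units,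
        hpN]
      ring
    refine ⟨j, by omega, Or.inr ?_⟩
    rw [he_eq, pow_add, Units.val_mul, hneg]
    ring

theorem stmt_13 (k p : ℕ) (hk : 0 < k) (hp : IsRadiusPrime k p) :
    (∃ a : Fin (((p - 1) / (2 * k)) * (p + k - 1) + 1) → Fin p,
        IsRadiusSeq k p (((p - 1) / (2 * k)) * (p + k - 1) + 1) a) ∧
      radiusMin k p ≤ ((p - 1) / (2 * k)) * (p + k - 1) + 1 := by
  obtain ⟨hprime, hmod, hdist⟩ := hp
  have := Fact.mk hprime
  have hpN : p - 1 = 2 * k * ((p - 1) / (2 * k)) :=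
    (Nat.mul_div_cancel' (hmod ▸ Nat.dvd_sub_mod p)).symm
  obtain ⟨g, hg⟩ := IsCyclic.exists_generator (α := (ZMod p)ˣ)
  have hseq := isRadiusSeq_stepWalk (k := k) (N := (p - 1) / (2 * k)) (fun j => (g ^ k) ^ j)
    fun e he => ZMod.exists_eq_natCast_mul_or_neg hk hpN
      (fun a ha b hb => hdist a b ha.1 ha.2 hb.1 hb.2) hg he
  exact ⟨⟨_, hseq⟩, Nat.sInf_le ⟨_, hseq⟩⟩
end
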